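/- arXiv:2203.09557 — 8 statements merged into one kernel-verified Lean document; each statement's English description precedes it below -/
import Mathlib

section
/- Let P be a probability measure on a measurable space X, let f ∈ L²(P), and let μ > 0. Among all finite signed measures R on X with R ≪ P, R(X) = 1, and dR/dP ∈ L²(P), the functional R ↦ (1/μ)·D₂(R‖P) − ∫ f dR attains its minimum at the unique measure R* whose Radon–Nikodym density is dR*/dP = 1 + (μ/2)(f − E_P[f]), and the minimum value equals −E_P[f] − (μ/4)·Var_P[f]. -/
/-!
For `v = 1 + (μ/2)(f - m)` with any constant `m`, the integrand of the objective satisfies pointwise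
`(w² - 1)/μ - f w = (v² - 1)/μ - f v + (w - v)²/μ + (2/μ - m)(w - v)`.
If `w` and `v` have the same total mass the last term integrates to zero, so the objective at `w`
exceeds its value at `v` by `(1/μ)‖w - v‖²`. The choice `m = E_P[f]` makes `v` a feasible density,
hence the unique minimiser, and comparing with the constant density `1` gives the minimum value.
-/

open MeasureTheory ProbabilityTheory

section

variable {X : Type*} [MeasurableSpace X] {P : Measure X} {f w v : X → ℝ}

lemma integral_sub_integral_sq [IsProbabilityMeasure P] (hf : MemLp f 2 P) :
    ∫ x, (f x - ∫ y, f y ∂P) ^ 2 ∂P = ∫ x, f x ^ 2 ∂P - (∫ x, f x ∂P) ^ 2 := by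
  rw [← variance_eq_integral hf.aemeasurable, variance_eq_sub hf]
  rfl

lemma memLp_one_add_mul_sub [IsFiniteMeasure P] {p : ENNReal} (hf : MemLp f p P) (c m : ℝ) :
    MemLp (fun x => 1 + c * (f x - m)) p P :=
  (memLp_const (1 : ℝ)).add ((hf.sub (memLp_const m)).const_mul c)

lemma integral_one_add_mul_sub_integral [IsProbabilityMeasure P] (hf : Integrable f P) (c : ℝ) :
    ∫ x, (1 + c * (f x - ∫ y, f y ∂P)) ∂P = 1 := by
  have hc : Integrable (fun x => c * (f x - ∫ y, f y ∂P)) P :=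
    (hf.sub (integrable_const _)).const_mul c
  rw [integral_add (integrable_const 1) hc, integral_const_mul, integral_sub hf (integrable_const _)]
  simp

lemma ae_eq_of_integral_sq_sub_eq_zero (h : Integrable (fun x => (w x - v x) ^ 2) P)
    (h0 : ∫ x, (w x - v x) ^ 2 ∂P = 0) : w =ᵐ[P] v := by
  have hae := (integral_eq_zero_iff_of_nonneg (fun x => sq_nonneg (w x - v x)) h).mp h0
  filter_upwards [hae] with x hx
  simpa [sub_eq_zero] using hx

/-- The functional `R ↦ (1/μ) D₂(R‖P) - ∫ f dR`, as a function of the density `w = dR/dP`. -/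
noncomputable def chiSqObjective (P : Measure X) (f : X → ℝ) (μ : ℝ) (w : X → ℝ) : ℝ :=
  (1 / μ) * ∫ x, (w x ^ 2 - 1) ∂P - ∫ x, f x * w x ∂P

lemma chiSqObjective_eq_integral [IsFiniteMeasure P] (μ : ℝ) (hf : MemLp f 2 P)
    (hw : MemLp w 2 P) :
    chiSqObjective P f μ w = ∫ x, ((1 / μ) * (w x ^ 2 - 1) - f x * w x) ∂P := by
  have hfw : Integrable (fun x => f x * w x) P := hf.integrable_mul hw
  have hw2 : Integrable (fun x => (1 / μ) * (w x ^ 2 - 1)) P :=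
    (hw.integrable_sq.sub (integrable_const 1)).const_mul _
  rw [integral_sub hw2 hfw, integral_const_mul]
  rfl

lemma chiSqObjective_eq_add_integral_sq_sub [IsFiniteMeasure P] {μ : ℝ} (hμ : μ ≠ 0) (m : ℝ)
    (hf : MemLp f 2 P) (hw : MemLp w 2 P) (hv : v = fun x => 1 + μ / 2 * (f x - m))
    (hmass : ∫ x, w x ∂P = ∫ x, v x ∂P) :
    chiSqObjective P f μ w = chiSqObjective P f μ v + (1 / μ) * ∫ x, (w x - v x) ^ 2 ∂P := by
  have hv2 : MemLp v 2 P := hv ▸ memLp_one_add_mul_sub hf _ m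
  have hdiff : Integrable (fun x => w x - v x) P :=
    (hw.sub hv2).integrable one_le_two
  calc chiSqObjective P f μ w
      = ∫ x, (((1 / μ) * (v x ^ 2 - 1) - f x * v x)
          + ((1 / μ) * (w x - v x) ^ 2 + (2 / μ - m) * (w x - v x))) ∂P := by
        rw [chiSqObjective_eq_integral μ hf hw]
        congr 1 with x
        subst hv
        field_simp
        ring
    _ = chiSqObjective P f μ v + (1 / μ) * ∫ x, (w x - v x) ^ 2 ∂P
          + (2 / μ - m) * ∫ x, (w x - v x) ∂P := by
        rw [integral_add, integral_add, integral_const_mul, integral_const_mul,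
          chiSqObjective_eq_integral μ hf hv2, add_assoc]
        · exact ((hw.sub hv2).integrable_sq).const_mul _
        · exact hdiff.const_mul _
        · exact ((hv2.integrable_sq.sub (integrable_const 1)).const_mul _).sub
            (hf.integrable_mul hv2 : Integrable (fun x => f x * v x) P)
        · exact (((hw.sub hv2).integrable_sq).const_mul _).add (hdiff.const_mul _)
    _ = chiSqObjective P f μ v + (1 / μ) * ∫ x, (w x - v x) ^ 2 ∂P := by
        rw [integral_sub (hw.integrable one_le_two) (hv2.integrable one_le_two), hmass,
          sub_self, mul_zero, add_zero]

end

/-- For a probability measure `P`, `f ∈ L²(P)` and `μ > 0`, among all finite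
signed measures `R ≪ P` with `R(X) = 1` and `dR/dP ∈ L²(P)` (encoded by their densities
`w = dR/dP`), the functional `R ↦ (1/μ)·D₂(R‖P) − ∫ f dR` attains its minimum at the unique
measure with density `1 + (μ/2)(f − E_P[f])`, and the minimum value is
`−E_P[f] − (μ/4)·Var_P[f]`. -/
theorem stmt_0 {X : Type*} [MeasurableSpace X] (P : Measure X) [IsProbabilityMeasure P]
    (f : X → ℝ) (hf : MemLp f 2 P) (μ : ℝ) (hμ : 0 < μ)
    (EP VarP : ℝ) (hEP : EP = ∫ x, f x ∂P) (hVarP : VarP = (∫ x, (f x) ^ 2 ∂P) - EP ^ 2)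
    (wstar : X → ℝ) (hwstar : wstar = fun x => 1 + (μ / 2) * (f x - EP))
    (J : (X → ℝ) → ℝ)
    (hJ : J = fun w => (1 / μ) * (∫ x, ((w x) ^ 2 - 1) ∂P) - ∫ x, f x * w x ∂P) :
    -- the candidate is feasible: `dR*/dP ∈ L²(P)` and `R*(X) = 1`
    (MemLp wstar 2 P ∧ (∫ x, wstar x ∂P) = 1) ∧
    -- the minimum value
    J wstar = -EP - (μ / 4) * VarP ∧
    -- minimality among all feasible densities
    (∀ w : X → ℝ, MemLp w 2 P → (∫ x, w x ∂P) = 1 → J wstar ≤ J w) ∧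
    -- uniqueness: any feasible minimizer coincides (P-a.e., i.e. as a measure) with `R*`
    (∀ w : X → ℝ, MemLp w 2 P → (∫ x, w x ∂P) = 1 → J w = J wstar → w =ᵐ[P] wstar) := by
  have hJ_eq (w : X → ℝ) : J w = chiSqObjective P f μ w := by rw [hJ]; rfl
  have hws : MemLp wstar 2 P := hwstar ▸ memLp_one_add_mul_sub hf _ EP
  have hmass : ∫ x, wstar x ∂P = 1 := by
    rw [hwstar, hEP]
    exact integral_one_add_mul_sub_integral (hf.integrable one_le_two) _
  have hgap (w : X → ℝ) (hw : MemLp w 2 P) (hw1 : ∫ x, w x ∂P = 1) :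
      J w = J wstar + (1 / μ) * ∫ x, (w x - wstar x) ^ 2 ∂P := by
    rw [hJ_eq, hJ_eq]
    exact chiSqObjective_eq_add_integral_sq_sub hμ.ne' EP hf hw hwstar (hw1.trans hmass.symm)
  have hgap_nonneg (w : X → ℝ) : 0 ≤ (1 / μ) * ∫ x, (w x - wstar x) ^ 2 ∂P := by
    have : 0 ≤ ∫ x, (w x - wstar x) ^ 2 ∂P := integral_nonneg fun x => sq_nonneg _
    positivity
  refine ⟨⟨hws, hmass⟩, ?_, fun w hw hw1 => ?_, fun w hw hw1 hmin => ?_⟩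
  · have hone : J 1 = -EP := by simp [hJ_eq, chiSqObjective, hEP]
    have hsq : ∫ x, ((1 : X → ℝ) x - wstar x) ^ 2 ∂P = (μ / 2) ^ 2 * VarP := by
      rw [hVarP, hEP, ← integral_sub_integral_sq hf, ← integral_const_mul, hwstar, hEP]
      congr 1 with x
      simp only [Pi.one_apply]
      ring
    have h1 := hgap 1 (memLp_const 1) (by simp)
    rw [hone, hsq] at h1
    field_simp at h1 ⊢
    linarith
  · linarith [hgap w hw hw1, hgap_nonneg w]
  · rw [hgap w hw hw1, add_eq_left, mul_eq_zero] at hmin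
    exact ae_eq_of_integral_sq_sub_eq_zero (hw.sub hws).integrable_sq
      (hmin.resolve_left (by positivity))
end

section
/- Let P be a probability measure on a measurable space X and let M be a finite signed measure with M ≪ P, M(X) = 1, and dM/dP ∈ L²(P). Then D₂(M‖P) = sup over f ∈ L²(P) of { ∫ f dM − E_P[f] − (1/4)·Var_P[f] }, and this supremum is attained at f = 2·(dM/dP). -/
/-!
Write `m = dM/dP`. When `E_P[m] = 1` we have `D₂(M‖P) = Var_P[m]`, and the objective is
`Cov_P[f, m] - Var_P[f] / 4 = Var_P[m] - Var_P[m - f/2]`. So it is at most `D₂(M‖P)`,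
with equality when `m - f/2` is constant, e.g. at `f = 2m`.
-/

open MeasureTheory ProbabilityTheory

section

variable {X : Type*} [MeasurableSpace X] {P : Measure X} {m f : X → ℝ}

lemma variance_fun_sub_half [IsFiniteMeasure P] (hm : MemLp m 2 P) (hf : MemLp f 2 P) :
    Var[fun x => m x - f x / 2; P] = Var[m; P] - cov[m, f; P] + Var[f; P] / 4 := by
  have hf2 : MemLp (fun x => f x / 2) 2 P := by simpa only [div_eq_mul_inv] using hf.mul_const 2⁻¹
  rw [variance_fun_sub hm hf2, covariance_fun_div_right]
  simp_rw [div_eq_mul_inv, variance_mul_const]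
  ring

lemma integral_mul_sub_integral_sub_quarter_variance [IsProbabilityMeasure P]
    (hm : MemLp m 2 P) (hf : MemLp f 2 P) (hm1 : ∫ x, m x ∂P = 1) :
    (∫ x, f x * m x ∂P) - (∫ x, f x ∂P) - 1 / 4 * ((∫ x, f x ^ 2 ∂P) - (∫ x, f x ∂P) ^ 2)
      = Var[m; P] - Var[fun x => m x - f x / 2; P] := by
  have hcov := covariance_eq_sub hf hm
  have hvar := variance_eq_sub hf
  simp only [Pi.mul_apply, Pi.pow_apply, hm1] at hcov hvar
  rw [variance_fun_sub_half hm hf, covariance_comm, hcov, hvar]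
  ring

end

/-- Variational representation of the χ² divergence for normalized measures.
A finite signed measure `M ≪ P` with `M(X) = 1` and `dM/dP ∈ L²(P)` is encoded by its
density `m = dM/dP`.  Then `D₂(M‖P) = sup over f ∈ L²(P) of
{∫ f dM − E_P[f] − (1/4)·Var_P[f]}`, attained at `f = 2·(dM/dP)`. -/
theorem stmt_1 {X : Type*} [MeasurableSpace X] (P : Measure X) [IsProbabilityMeasure P]
    (m : X → ℝ) (hm : MemLp m 2 P) (hm1 : (∫ x, m x ∂P) = 1)
    (D2 : ℝ) (hD2 : D2 = ∫ x, ((m x) ^ 2 - 1) ∂P)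
    (obj : (X → ℝ) → ℝ)
    (hobj : obj = fun f => (∫ x, f x * m x ∂P) - (∫ x, f x ∂P)
      - (1 / 4) * ((∫ x, (f x) ^ 2 ∂P) - (∫ x, f x ∂P) ^ 2)) :
    -- the supremum is attained at `f = 2·(dM/dP)`, with value `D₂(M‖P)` ...
    obj (fun x => 2 * m x) = D2 ∧
    -- ... and `D₂(M‖P)` is an upper bound over all `f ∈ L²(P)`
    (∀ f : X → ℝ, MemLp f 2 P → obj f ≤ D2) := by
  have hD2_var : D2 = Var[m; P] := by
    rw [hD2, variance_eq_sub hm, integral_sub hm.integrable_sq (integrable_const 1), hm1]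
    simp
  subst hobj hD2_var
  refine ⟨?_, fun f hf => ?_⟩
  · refine (integral_mul_sub_integral_sub_quarter_variance hm (hm.const_mul 2) hm1).trans ?_
    have hzero : (fun x => m x - 2 * m x / 2) = 0 := by ext x; simp
    rw [hzero, variance_zero, sub_zero]
  · refine (integral_mul_sub_integral_sub_quarter_variance hm hf hm1).trans_le ?_
    linarith [variance_nonneg (fun x => m x - f x / 2) P]
end

section
/- Let P and Q be probability measures on a measurable space X, let F be a convex set of measurable functions with F ⊆ L²(P) ∩ L¹(Q) and f ∈ F ⟹ −f ∈ F, and let μ > 0. Suppose f* ∈ F attains the supremum over f ∈ F of { E_Q[f] − E_P[f] − (μ/4)·Var_P[f] }. Define δ := E_Q[f*] − E_P[f*] − (μ/2)·Var_P[f*] and let R* be the signed measure with dR*/dP = 1 + (μ/2)(f* − E_P[f*]). Then δ ≥ 0, R*(X) = 1, IPM_F(Q, R*) = δ, and R* minimizes D₂(R‖P) among all finite signed measures R with R ≪ P, dR/dP ∈ L²(P), R(X) = 1, and IPM_F(Q, R) ≤ δ. -/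
/-!
Along a segment `f* + t (f - f*)` the objective `E_Q f - E_P f - c Var_P f` is a quadratic in `t`,
so maximality of `f*` on the convex set `F` yields the first-order condition
`E_Q f - E_P f - 2c Cov_P(f, f*) ≤ E_Q f* - E_P f* - 2c Var_P f*` for `f ∈ F`; with `c = μ/4` the
right side is `δ`. Because `∫ f dR* = E_P f + (μ/2) Cov_P(f, f*)`, the left side is exactly
`E_Q f - ∫ f dR*`, so `IPM_F(Q, R*) = δ`, attained at `f*`, and testing `-f*` gives `δ ≥ 0`.
For a feasible density `w`, `D₂(R‖P) = Var_P w`, and the constraint at `f*` gives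
`Cov_P(f*, w - w*) ≥ 0`, so `Cov_P(w*, w - w*) = (μ/2) Cov_P(f*, w - w*) ≥ 0` and
`Var_P w = Var_P w* + 2 Cov_P(w*, w - w*) + Var_P (w - w*) ≥ Var_P w*`.
-/

open MeasureTheory ProbabilityTheory Filter Topology

theorem nonpos_of_forall_mul_le_mul_sq {a b : ℝ}
    (h : ∀ t : ℝ, 0 < t → t ≤ 1 → a * t ≤ b * t ^ 2) : a ≤ 0 := by
  have hev : ∀ᶠ t in 𝓝[>] (0 : ℝ), a ≤ b * t := by
    filter_upwards [Ioc_mem_nhdsGT one_pos] with t ⟨ht0, ht1⟩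
    exact le_of_mul_le_mul_right (by simpa [pow_two, mul_assoc] using h t ht0 ht1) ht0
  have hlim : Tendsto (fun t => b * t) (𝓝[>] (0 : ℝ)) (𝓝 0) := by
    simpa using ((continuous_const_mul b).tendsto 0).mono_left nhdsWithin_le_nhds
  exact ge_of_tendsto hlim hev

section

variable {X : Type*} [MeasurableSpace X] {P Q : Measure X}

noncomputable def dualObjective (P Q : Measure X) (c : ℝ) (f : X → ℝ) : ℝ :=
  ∫ x, f x ∂Q - ∫ x, f x ∂P - c * Var[f; P]

theorem dualObjective_add_smul [IsFiniteMeasure P] {f h : X → ℝ} (c t : ℝ)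
    (hfP : MemLp f 2 P) (hfQ : Integrable f Q) (hhP : MemLp h 2 P) (hhQ : Integrable h Q) :
    dualObjective P Q c (f + t • h) = dualObjective P Q c f
      + t * (∫ x, h x ∂Q - ∫ x, h x ∂P - 2 * c * cov[f, h; P]) - c * t ^ 2 * Var[h; P] := by
  have hvar : Var[f + t • h; P] = Var[f; P] + 2 * t * cov[f, h; P] + t ^ 2 * Var[h; P] := by
    rw [variance_add hfP (hhP.const_smul t), covariance_smul_right, variance_smul]
    ring
  simp only [dualObjective, hvar, Pi.add_apply, Pi.smul_apply, smul_eq_mul]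
  rw [integral_add hfQ (hhQ.const_mul t), integral_add (hfP.integrable one_le_two)
    ((hhP.integrable one_le_two).const_mul t), integral_const_mul, integral_const_mul]
  ring

theorem integral_sub_covariance_le_of_isMaxOn [IsFiniteMeasure P] {F : Set (X → ℝ)}
    (hconv : Convex ℝ F) (hF : ∀ f ∈ F, MemLp f 2 P ∧ Integrable f Q) {c : ℝ} {f₀ f : X → ℝ}
    (hmax : IsMaxOn (dualObjective P Q c) F f₀) (hf₀ : f₀ ∈ F) (hf : f ∈ F) :
    ∫ x, f x ∂Q - ∫ x, f x ∂P - 2 * c * cov[f, f₀; P] ≤ dualObjective P Q (2 * c) f₀ := by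
  obtain ⟨hf₀P, hf₀Q⟩ := hF f₀ hf₀
  obtain ⟨hfP, hfQ⟩ := hF f hf
  have hslope : ∫ x, (f - f₀) x ∂Q - ∫ x, (f - f₀) x ∂P - 2 * c * cov[f₀, f - f₀; P] ≤ 0 := by
    refine nonpos_of_forall_mul_le_mul_sq (b := c * Var[f - f₀; P]) fun t ht0 ht1 => ?_
    have hmem : f₀ + t • (f - f₀) ∈ F := hconv.add_smul_sub_mem hf₀ hf ⟨ht0.le, ht1⟩
    have hle := isMaxOn_iff.1 hmax _ hmem
    rw [dualObjective_add_smul c t hf₀P hf₀Q (hfP.sub hf₀P) (hfQ.sub hf₀Q)] at hle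
    linarith
  rw [covariance_sub_right hf₀P hfP hf₀P, covariance_self hf₀P.aemeasurable,
    covariance_comm] at hslope
  simp only [Pi.sub_apply] at hslope
  rw [integral_sub hfQ hf₀Q, integral_sub (hfP.integrable one_le_two)
    (hf₀P.integrable one_le_two)] at hslope
  simp only [dualObjective]
  linarith

theorem variance_eq_integral_sq_sub [IsProbabilityMeasure P] {f : X → ℝ} (hf : MemLp f 2 P) :
    Var[f; P] = ∫ x, f x ^ 2 ∂P - (∫ x, f x ∂P) ^ 2 :=
  variance_eq_sub hf

theorem integral_mul_eq_covariance_add [IsProbabilityMeasure P] {f w : X → ℝ}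
    (hf : MemLp f 2 P) (hw : MemLp w 2 P) :
    ∫ x, f x * w x ∂P = cov[f, w; P] + (∫ x, f x ∂P) * ∫ x, w x ∂P := by
  rw [covariance_eq_sub hf hw]
  simp only [Pi.mul_apply]
  ring

theorem integral_sq_sub_one_eq_variance [IsProbabilityMeasure P] {w : X → ℝ}
    (hw : MemLp w 2 P) (hw1 : ∫ x, w x ∂P = 1) :
    ∫ x, (w x ^ 2 - 1) ∂P = Var[w; P] := by
  rw [variance_eq_integral_sq_sub hw, hw1, integral_sub hw.integrable_sq (integrable_const 1)]
  simp

theorem variance_le_variance_of_covariance_sub_nonneg [IsFiniteMeasure P] {w₀ w : X → ℝ}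
    (hw₀ : MemLp w₀ 2 P) (hw : MemLp w 2 P) (h : 0 ≤ cov[w₀, w - w₀; P]) :
    Var[w₀; P] ≤ Var[w; P] := by
  have hsplit := variance_add hw₀ (hw.sub hw₀)
  rw [add_sub_cancel] at hsplit
  linarith [variance_nonneg (w - w₀) P]

noncomputable def linearTilt (P : Measure X) (k : ℝ) (g : X → ℝ) : X → ℝ :=
  fun x => 1 + k * (g x - ∫ y, g y ∂P)

theorem memLp_linearTilt [IsFiniteMeasure P] {g : X → ℝ} (k : ℝ) (hg : MemLp g 2 P) :
    MemLp (linearTilt P k g) 2 P :=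
  (memLp_const (1 : ℝ)).add ((hg.sub (memLp_const (∫ y, g y ∂P))).const_mul k)

theorem integral_linearTilt [IsProbabilityMeasure P] {g : X → ℝ} (k : ℝ) (hg : Integrable g P) :
    ∫ x, linearTilt P k g x ∂P = 1 := by
  unfold linearTilt
  rw [integral_add (integrable_const 1) (by fun_prop), integral_const_mul,
    integral_sub hg (integrable_const _)]
  simp

theorem covariance_linearTilt_right [IsProbabilityMeasure P] {f g : X → ℝ} (k : ℝ)
    (hg : Integrable g P) : cov[f, linearTilt P k g; P] = k * cov[f, g; P] := by
  unfold linearTilt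
  rw [covariance_const_add_right (by fun_prop),
    covariance_const_mul_right, covariance_sub_const_right hg]

theorem integral_mul_linearTilt [IsProbabilityMeasure P] {f g : X → ℝ} (k : ℝ)
    (hf : MemLp f 2 P) (hg : MemLp g 2 P) :
    ∫ x, f x * linearTilt P k g x ∂P = ∫ x, f x ∂P + k * cov[f, g; P] := by
  rw [integral_mul_eq_covariance_add hf (memLp_linearTilt k hg),
    integral_linearTilt k (hg.integrable one_le_two),
    covariance_linearTilt_right k (hg.integrable one_le_two)]
  ring

theorem variance_linearTilt_le [IsProbabilityMeasure P] {g w : X → ℝ} {k : ℝ} (hk : 0 ≤ k)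
    (hg : MemLp g 2 P) (hw : MemLp w 2 P) (hw1 : ∫ x, w x ∂P = 1)
    (h : ∫ x, g x * linearTilt P k g x ∂P ≤ ∫ x, g x * w x ∂P) :
    Var[linearTilt P k g; P] ≤ Var[w; P] := by
  have hgI : Integrable g P := hg.integrable one_le_two
  have htilt := memLp_linearTilt k hg
  refine variance_le_variance_of_covariance_sub_nonneg htilt hw ?_
  rw [integral_mul_eq_covariance_add hg hw, integral_mul_eq_covariance_add hg htilt, hw1,
    integral_linearTilt k hgI] at h
  rw [covariance_comm, covariance_linearTilt_right k hgI, covariance_comm,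
    covariance_sub_right hg hw htilt]
  exact mul_nonneg hk (by linarith)

end

theorem stmt_3_general {X : Type*} [MeasurableSpace X] (P Q : Measure X)
    [IsProbabilityMeasure P]
    (F : Set (X → ℝ)) (hconv : Convex ℝ F)
    (hF : ∀ f ∈ F, MemLp f 2 P ∧ Integrable f Q)
    (hsymm : ∀ f ∈ F, -f ∈ F)
    (μ : ℝ) (hμ : 0 < μ)
    (obj : (X → ℝ) → ℝ)
    (hobj : obj = fun f => (∫ x, f x ∂Q) - (∫ x, f x ∂P)
      - (μ / 4) * ((∫ x, (f x) ^ 2 ∂P) - (∫ x, f x ∂P) ^ 2))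
    (fstar : X → ℝ) (hfstarF : fstar ∈ F)
    (hfstarmax : ∀ f ∈ F, obj f ≤ obj fstar)
    (δ : ℝ)
    (hδ : δ = (∫ x, fstar x ∂Q) - (∫ x, fstar x ∂P)
      - (μ / 2) * ((∫ x, (fstar x) ^ 2 ∂P) - (∫ x, fstar x ∂P) ^ 2))
    (wstar : X → ℝ) (hwstar : wstar = fun x => 1 + (μ / 2) * (fstar x - ∫ x', fstar x' ∂P)) :
    -- δ ≥ 0
    0 ≤ δ ∧
    -- R*(X) = 1
    (∫ x, wstar x ∂P) = 1 ∧
    -- IPM_F(Q, R*) = δ  (δ is the least upper bound of the IPM set for R*)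
    IsLUB ((fun f : X → ℝ => (∫ x, f x ∂Q) - ∫ x, f x * wstar x ∂P) '' F) δ ∧
    -- R* minimizes D₂(R‖P) among feasible R with IPM_F(Q,R) ≤ δ
    (∀ w : X → ℝ, MemLp w 2 P → (∫ x, w x ∂P) = 1 →
      (∀ f ∈ F, (∫ x, f x ∂Q) - (∫ x, f x * w x ∂P) ≤ δ) →
      (∫ x, ((wstar x) ^ 2 - 1) ∂P) ≤ ∫ x, ((w x) ^ 2 - 1) ∂P) := by
  obtain ⟨hfstarP, -⟩ := hF fstar hfstarF
  replace hwstar : wstar = linearTilt P (μ / 2) fstar := hwstar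
  subst hwstar
  have hwstar1 := integral_linearTilt (μ / 2) (hfstarP.integrable one_le_two)
  have hmax : IsMaxOn (dualObjective P Q (μ / 4)) F fstar := isMaxOn_iff.2 fun f hf => by
    simpa only [hobj, dualObjective, variance_eq_integral_sq_sub (hF f hf).1,
      variance_eq_integral_sq_sub hfstarP] using hfstarmax f hf
  have hδ_dual : δ = dualObjective P Q (2 * (μ / 4)) fstar := by
    rw [hδ, dualObjective, variance_eq_integral_sq_sub hfstarP]
    ring
  have hbound : ∀ f ∈ F, ∫ x, f x ∂Q - ∫ x, f x * linearTilt P (μ / 2) fstar x ∂P ≤ δ :=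
    fun f hf => by
      rw [integral_mul_linearTilt _ (hF f hf).1 hfstarP, hδ_dual]
      linarith [integral_sub_covariance_le_of_isMaxOn hconv hF hmax hfstarF hf]
  have hattain : ∫ x, fstar x ∂Q - ∫ x, fstar x * linearTilt P (μ / 2) fstar x ∂P = δ := by
    rw [integral_mul_linearTilt _ hfstarP hfstarP, covariance_self hfstarP.aemeasurable, hδ_dual,
      dualObjective]
    ring
  refine ⟨?_, hwstar1, IsGreatest.isLUB ⟨⟨fstar, hfstarF, hattain⟩, ?_⟩, ?_⟩
  · have hneg := hbound (-fstar) (hsymm fstar hfstarF)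
    simp only [Pi.neg_apply, neg_mul, integral_neg] at hneg
    linarith
  · rintro _ ⟨f, hf, rfl⟩
    exact hbound f hf
  · intro w hwP hw1 hw
    rw [integral_sq_sub_one_eq_variance (memLp_linearTilt _ hfstarP) hwstar1,
      integral_sq_sub_one_eq_variance hwP hw1]
    exact variance_linearTilt_le (by positivity) hfstarP hwP hw1
      (by linarith [hw fstar hfstarF])

/-- duality for the constrained balancing-weights problem.  Signed measures
`R ≪ P` with `dR/dP ∈ L²(P)` are encoded by their densities `w = dR/dP`, so that
`∫ f dR = ∫ f·w dP` and `D₂(R‖P) = ∫ (w² − 1) dP`.  If `f* ∈ F` attains the supremum of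
`E_Q[f] − E_P[f] − (μ/4)·Var_P[f]` over the convex symmetric class `F ⊆ L²(P) ∩ L¹(Q)`,
`δ := E_Q[f*] − E_P[f*] − (μ/2)·Var_P[f*]` and `dR*/dP = 1 + (μ/2)(f* − E_P[f*])`, then
`δ ≥ 0`, `R*(X) = 1`, `IPM_F(Q,R*) = δ`, and `R*` minimizes `D₂(R‖P)` over all feasible `R`
with `IPM_F(Q,R) ≤ δ`. -/
theorem stmt_3 {X : Type*} [MeasurableSpace X] (P Q : Measure X)
    [IsProbabilityMeasure P] [IsProbabilityMeasure Q]
    (F : Set (X → ℝ)) (hconv : Convex ℝ F)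
    (hF : ∀ f ∈ F, MemLp f 2 P ∧ Integrable f Q)
    (hsymm : ∀ f ∈ F, -f ∈ F)
    (μ : ℝ) (hμ : 0 < μ)
    (obj : (X → ℝ) → ℝ)
    (hobj : obj = fun f => (∫ x, f x ∂Q) - (∫ x, f x ∂P)
      - (μ / 4) * ((∫ x, (f x) ^ 2 ∂P) - (∫ x, f x ∂P) ^ 2))
    (fstar : X → ℝ) (hfstarF : fstar ∈ F)
    (hfstarmax : ∀ f ∈ F, obj f ≤ obj fstar)
    (δ : ℝ)
    (hδ : δ = (∫ x, fstar x ∂Q) - (∫ x, fstar x ∂P)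
      - (μ / 2) * ((∫ x, (fstar x) ^ 2 ∂P) - (∫ x, fstar x ∂P) ^ 2))
    (wstar : X → ℝ) (hwstar : wstar = fun x => 1 + (μ / 2) * (fstar x - ∫ x', fstar x' ∂P)) :
    -- δ ≥ 0
    0 ≤ δ ∧
    -- R*(X) = 1
    (∫ x, wstar x ∂P) = 1 ∧
    -- IPM_F(Q, R*) = δ  (δ is the least upper bound of the IPM set for R*)
    IsLUB ((fun f : X → ℝ => (∫ x, f x ∂Q) - ∫ x, f x * wstar x ∂P) '' F) δ ∧
    -- R* minimizes D₂(R‖P) among feasible R with IPM_F(Q,R) ≤ δ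
    (∀ w : X → ℝ, MemLp w 2 P → (∫ x, w x ∂P) = 1 →
      (∀ f ∈ F, (∫ x, f x ∂Q) - (∫ x, f x * w x ∂P) ≤ δ) →
      (∫ x, ((wstar x) ^ 2 - 1) ∂P) ≤ ∫ x, ((w x) ^ 2 - 1) ∂P) :=
  stmt_3_general P Q F hconv hF hsymm μ hμ obj hobj fstar hfstarF hfstarmax δ hδ wstar hwstar
end

section
/- Let P and Q be probability measures on a measurable space X, let f₀ ∈ L²(P) ∩ L¹(Q) with Var_P[f₀] > 0, let σ² > 0, and set Δ := E_Q[f₀] − E_P[f₀]. Among all w ∈ L²(P) with E_P[w] = 1, the functional w ↦ (E_P[w·f₀] − E_Q[f₀])² + σ²·(E_P[w²] − 1) is uniquely minimized at w* = 1 + (Δ / (Var_P[f₀] + σ²))·(f₀ − E_P[f₀]); the minimum value equals σ²·Δ² / (Var_P[f₀] + σ²), and the bias of the minimizer satisfies |E_P[w*·f₀] − E_Q[f₀]| = (σ² / (Var_P[f₀] + σ²))·|Δ|. -/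
/-!
Write `w* = 1 + c (f₀ − E_P f₀)` with `c = Δ / (Var_P[f₀] + σ²)`. For every `w` with
`E_P[w] = 1` one has `E_P[w w*] = 1 + c (E_P[w f₀] − E_P f₀)`, and expanding the loss gives the
exact identity
`K w = K w* + (E_P[w f₀] − E_P[w* f₀])² + σ² E_P[(w* − w)²]`:
the terms linear in `w − w*` cancel because the bias of `w*` is `−σ² c`.
Minimality is read off directly, and since `σ² > 0` equality forces `w = w*` a.e.
-/

open MeasureTheory

section BalancingWeights

variable {X : Type*} [MeasurableSpace X] {P : Measure X}

section SquareIntegrable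

variable {f g : X → ℝ}

lemma integral_sub_sq_of_memLp_two (hf : MemLp f 2 P) (hg : MemLp g 2 P) :
    ∫ x, (f x - g x) ^ 2 ∂P
      = ∫ x, f x ^ 2 ∂P - 2 * ∫ x, f x * g x ∂P + ∫ x, g x ^ 2 ∂P := by
  have hfg : Integrable (fun x => f x * g x) P := hf.integrable_mul hg
  have hsum : Integrable (fun x => f x ^ 2 + g x ^ 2) P := hf.integrable_sq.add hg.integrable_sq
  calc ∫ x, (f x - g x) ^ 2 ∂P
      = ∫ x, (f x ^ 2 + g x ^ 2) - 2 * (f x * g x) ∂P := by congr 1; ext x; ring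
    _ = _ := by
      rw [integral_sub hsum (hfg.const_mul 2), integral_add hf.integrable_sq hg.integrable_sq,
        integral_const_mul]
      ring

lemma ae_eq_of_integral_sub_sq_eq_zero (hf : MemLp f 2 P) (hg : MemLp g 2 P)
    (h : ∫ x, (f x - g x) ^ 2 ∂P = 0) : f =ᵐ[P] g := by
  have hsq : (fun x => (f x - g x) ^ 2) =ᵐ[P] 0 :=
    (integral_eq_zero_iff_of_nonneg (fun x => sq_nonneg _) (hf.sub hg).integrable_sq).mp h
  filter_upwards [hsq] with x hx
  exact sub_eq_zero.mp (sq_eq_zero_iff.mp hx)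

end SquareIntegrable

noncomputable def affineWeight (P : Measure X) (f : X → ℝ) (c : ℝ) : X → ℝ :=
  fun x => 1 + c * (f x - ∫ y, f y ∂P)

noncomputable def mseLoss (P : Measure X) (f : X → ℝ) (target σ2 : ℝ) (w : X → ℝ) : ℝ :=
  ((∫ x, w x * f x ∂P) - target) ^ 2 + σ2 * ((∫ x, w x ^ 2 ∂P) - 1)

section AffineWeight

variable {f w : X → ℝ} {c : ℝ}

lemma integral_affineWeight_mul (hw : Integrable w P) (hwf : Integrable (fun x => w x * f x) P) :
    ∫ x, affineWeight P f c x * w x ∂P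
      = ∫ x, w x ∂P + c * (∫ x, w x * f x ∂P - (∫ x, f x ∂P) * ∫ x, w x ∂P) := by
  have hcomb : Integrable (fun x => c * (w x * f x - (∫ y, f y ∂P) * w x)) P :=
    (hwf.sub (hw.const_mul _)).const_mul c
  calc ∫ x, affineWeight P f c x * w x ∂P
      = ∫ x, w x + c * (w x * f x - (∫ y, f y ∂P) * w x) ∂P := by
        congr 1; ext x; simp only [affineWeight]; ring
    _ = _ := by
      rw [integral_add hw hcomb, integral_const_mul, integral_sub hwf (hw.const_mul _),
        integral_const_mul]

variable [IsProbabilityMeasure P]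

lemma memLp_affineWeight (hf : MemLp f 2 P) : MemLp (affineWeight P f c) 2 P := by
  have hcentered : MemLp (fun x => c * (f x - ∫ y, f y ∂P)) 2 P :=
    (hf.sub (memLp_const _)).const_mul c
  exact (memLp_const (1 : ℝ)).add hcentered

lemma integral_affineWeight (hf : MemLp f 2 P) : ∫ x, affineWeight P f c x ∂P = 1 := by
  have h := integral_affineWeight_mul (P := P) (f := f) (c := c) (integrable_const (1 : ℝ))
    (by simpa only [one_mul] using hf.integrable one_le_two)
  simpa only [mul_one, one_mul, integral_const, probReal_univ, smul_eq_mul, sub_self,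
    mul_zero, add_zero] using h

lemma integral_affineWeight_mul_self (hf : MemLp f 2 P) :
    ∫ x, affineWeight P f c x * f x ∂P
      = ∫ x, f x ∂P + c * (∫ x, f x ^ 2 ∂P - (∫ x, f x ∂P) ^ 2) := by
  have h := integral_affineWeight_mul (P := P) (c := c) (hf.integrable one_le_two)
    (hf.integrable_mul hf)
  simpa only [← sq] using h

lemma integral_affineWeight_sq (hf : MemLp f 2 P) :
    ∫ x, affineWeight P f c x ^ 2 ∂P
      = 1 + c ^ 2 * (∫ x, f x ^ 2 ∂P - (∫ x, f x ∂P) ^ 2) := by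
  have h := integral_affineWeight_mul (P := P) (c := c)
    ((memLp_affineWeight (c := c) hf).integrable one_le_two)
    ((memLp_affineWeight (c := c) hf).integrable_mul hf)
  simp only [← sq] at h
  rw [h, integral_affineWeight hf, integral_affineWeight_mul_self hf]
  ring

lemma mseLoss_affineWeight (hf : MemLp f 2 P) (target σ2 : ℝ) :
    mseLoss P f target σ2 (affineWeight P f c)
      = (∫ x, f x ∂P + c * (∫ x, f x ^ 2 ∂P - (∫ x, f x ∂P) ^ 2) - target) ^ 2
        + σ2 * (c ^ 2 * (∫ x, f x ^ 2 ∂P - (∫ x, f x ∂P) ^ 2)) := by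
  rw [mseLoss, integral_affineWeight_mul_self hf, integral_affineWeight_sq hf, add_sub_cancel_left]

lemma mseLoss_eq_mseLoss_affineWeight_add (hf : MemLp f 2 P) (hw : MemLp w 2 P)
    (hw1 : ∫ x, w x ∂P = 1) {target σ2 : ℝ}
    (hc : c * (∫ x, f x ^ 2 ∂P - (∫ x, f x ∂P) ^ 2 + σ2) = target - ∫ x, f x ∂P) :
    mseLoss P f target σ2 w
      = mseLoss P f target σ2 (affineWeight P f c)
        + (∫ x, w x * f x ∂P - ∫ x, affineWeight P f c x * f x ∂P) ^ 2
        + σ2 * ∫ x, (affineWeight P f c x - w x) ^ 2 ∂P := by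
  have hcross := integral_affineWeight_mul (c := c) (hw.integrable one_le_two)
    (hw.integrable_mul hf)
  rw [hw1] at hcross
  obtain rfl : target = ∫ x, f x ∂P + c * (∫ x, f x ^ 2 ∂P - (∫ x, f x ∂P) ^ 2 + σ2) := by
    linarith
  rw [integral_sub_sq_of_memLp_two (memLp_affineWeight hf) hw, hcross,
    mseLoss_affineWeight hf, integral_affineWeight_mul_self hf, integral_affineWeight_sq hf,
    mseLoss]
  ring

end AffineWeight

end BalancingWeights

theorem stmt_6_general {X : Type*} [MeasurableSpace X] (P : Measure X)
    [IsProbabilityMeasure P]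
    (f₀ : X → ℝ) (hf₀2 : MemLp f₀ 2 P)
    (EPf EQf VarPf : ℝ)
    (hEPf : EPf = ∫ x, f₀ x ∂P)
    (hVarPf : VarPf = (∫ x, (f₀ x) ^ 2 ∂P) - EPf ^ 2) (hVarpos : 0 < VarPf)
    (σ2 : ℝ) (hσ2 : 0 < σ2)
    (Δ : ℝ) (hΔ : Δ = EQf - EPf)
    (K : (X → ℝ) → ℝ)
    (hK : K = fun w => ((∫ x, w x * f₀ x ∂P) - EQf) ^ 2 + σ2 * ((∫ x, (w x) ^ 2 ∂P) - 1))
    (wstar : X → ℝ)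
    (hwstar : wstar = fun x => 1 + (Δ / (VarPf + σ2)) * (f₀ x - EPf)) :
    -- w* is feasible
    (MemLp wstar 2 P ∧ (∫ x, wstar x ∂P) = 1) ∧
    -- minimum value
    K wstar = σ2 * Δ ^ 2 / (VarPf + σ2) ∧
    -- minimality
    (∀ w : X → ℝ, MemLp w 2 P → (∫ x, w x ∂P) = 1 → K wstar ≤ K w) ∧
    -- uniqueness (P-a.e.)
    (∀ w : X → ℝ, MemLp w 2 P → (∫ x, w x ∂P) = 1 → K w = K wstar → w =ᵐ[P] wstar) ∧
    -- bias of the minimizer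
    |(∫ x, wstar x * f₀ x ∂P) - EQf| = (σ2 / (VarPf + σ2)) * |Δ| := by
  subst hEPf
  obtain rfl : K = mseLoss P f₀ EQf σ2 := hK
  obtain rfl : wstar = affineWeight P f₀ (Δ / (VarPf + σ2)) := hwstar
  set c := Δ / (VarPf + σ2) with hc_def
  have hD : 0 < VarPf + σ2 := add_pos hVarpos hσ2
  have hc : c * (∫ x, f₀ x ^ 2 ∂P - (∫ x, f₀ x ∂P) ^ 2 + σ2) = EQf - ∫ x, f₀ x ∂P := by
    rw [← hVarPf, ← hΔ, div_mul_cancel₀ _ hD.ne']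
  have hgap_nonneg : ∀ w : X → ℝ,
      0 ≤ (∫ x, w x * f₀ x ∂P - ∫ x, affineWeight P f₀ c x * f₀ x ∂P) ^ 2 ∧
        0 ≤ ∫ x, (affineWeight P f₀ c x - w x) ^ 2 ∂P :=
    fun w => ⟨sq_nonneg _, integral_nonneg fun x => sq_nonneg _⟩
  refine ⟨⟨memLp_affineWeight hf₀2, integral_affineWeight hf₀2⟩, ?_, ?_, ?_, ?_⟩
  · rw [mseLoss_affineWeight hf₀2, ← hVarPf, hc_def, hΔ]
    field_simp
    ring
  · intro w hw hw1
    obtain ⟨hmean, hdist⟩ := hgap_nonneg w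
    rw [mseLoss_eq_mseLoss_affineWeight_add hf₀2 hw hw1 hc]
    nlinarith
  · intro w hw hw1 hKw
    obtain ⟨hmean, hdist⟩ := hgap_nonneg w
    rw [mseLoss_eq_mseLoss_affineWeight_add hf₀2 hw hw1 hc] at hKw
    refine (ae_eq_of_integral_sub_sq_eq_zero (memLp_affineWeight hf₀2) hw ?_).symm
    nlinarith
  · have hbias : ∫ x, affineWeight P f₀ c x * f₀ x ∂P - EQf = -(σ2 / (VarPf + σ2) * Δ) := by
      rw [integral_affineWeight_mul_self hf₀2, ← hVarPf, hc_def, hΔ]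
      field_simp
      ring
    rw [hbias, abs_neg, abs_mul, abs_of_pos (div_pos hσ2 hD)]

/-- the full-information case.  Among all weights `w ∈ L²(P)` with
`E_P[w] = 1`, the MSE functional `w ↦ (E_P[w·f₀] − E_Q[f₀])² + σ²·(E_P[w²] − 1)` is
uniquely minimized at `w* = 1 + (Δ/(Var_P[f₀] + σ²))·(f₀ − E_P[f₀])` where
`Δ = E_Q[f₀] − E_P[f₀]`; the minimum value is `σ²·Δ²/(Var_P[f₀] + σ²)` and the bias of the
minimizer is `(σ²/(Var_P[f₀] + σ²))·|Δ|`. -/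
theorem stmt_6 {X : Type*} [MeasurableSpace X] (P Q : Measure X)
    [IsProbabilityMeasure P] [IsProbabilityMeasure Q]
    (f₀ : X → ℝ) (hf₀2 : MemLp f₀ 2 P) (hf₀Q : Integrable f₀ Q)
    (EPf EQf VarPf : ℝ)
    (hEPf : EPf = ∫ x, f₀ x ∂P) (hEQf : EQf = ∫ x, f₀ x ∂Q)
    (hVarPf : VarPf = (∫ x, (f₀ x) ^ 2 ∂P) - EPf ^ 2) (hVarpos : 0 < VarPf)
    (σ2 : ℝ) (hσ2 : 0 < σ2)
    (Δ : ℝ) (hΔ : Δ = EQf - EPf)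
    (K : (X → ℝ) → ℝ)
    (hK : K = fun w => ((∫ x, w x * f₀ x ∂P) - EQf) ^ 2 + σ2 * ((∫ x, (w x) ^ 2 ∂P) - 1))
    (wstar : X → ℝ)
    (hwstar : wstar = fun x => 1 + (Δ / (VarPf + σ2)) * (f₀ x - EPf)) :
    -- w* is feasible
    (MemLp wstar 2 P ∧ (∫ x, wstar x ∂P) = 1) ∧
    -- minimum value
    K wstar = σ2 * Δ ^ 2 / (VarPf + σ2) ∧
    -- minimality
    (∀ w : X → ℝ, MemLp w 2 P → (∫ x, w x ∂P) = 1 → K wstar ≤ K w) ∧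
    -- uniqueness (P-a.e.)
    (∀ w : X → ℝ, MemLp w 2 P → (∫ x, w x ∂P) = 1 → K w = K wstar → w =ᵐ[P] wstar) ∧
    -- bias of the minimizer
    |(∫ x, wstar x * f₀ x ∂P) - EQf| = (σ2 / (VarPf + σ2)) * |Δ| :=
  stmt_6_general P f₀ hf₀2 EPf EQf VarPf hEPf hVarPf hVarpos σ2 hσ2 Δ hΔ K hK wstar hwstar
end

section
/- Let Q be a probability measure and R a finite signed measure on ℝ^d with R(ℝ^d) = 1, and suppose ∫‖x‖² dQ(x) ≤ M and ∫‖x‖² d|R|(x) ≤ M for some M ≥ 0, where |R| is the total variation measure of R. Then for every β ∈ ℝ^d with ‖β‖₂ ≤ 1 and every t > 0, |∫⟨β,x⟩ dQ(x) − ∫⟨β,x⟩ dR(x)| ≤ t·‖Q − R‖_TV + 2M/t; consequently |∫⟨β,x⟩ dQ(x) − ∫⟨β,x⟩ dR(x)| ≤ 2·√(2M·‖Q − R‖_TV). -/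
/-!
Truncate `f = ⟪β, ·⟫` at level `t`. The truncation is bounded by `t`, so its integrals against
`Q` and `R` differ by at most `t ‖Q − R‖_TV`; writing both sides through Jordan decompositions
turns this into an identity between (positive) measures. The remainder satisfies
`|f − trunc_t f| ≤ f² / t ≤ ‖x‖² / t`, so its integrals against `Q` and `|R|` are at most `M / t`
each. Minimising `t δ + 2M / t` over `t > 0` gives `2 √(2 M δ)`.
-/

open MeasureTheory
open scoped RealInnerProductSpace ENNReal

/-- Integral of a real function against a finite signed measure, via the Jordan
decomposition: `∫ f dR = ∫ f dR⁺ − ∫ f dR⁻`. -/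
noncomputable def signedIntegral {X : Type*} [MeasurableSpace X]
    (R : MeasureTheory.SignedMeasure X) (f : X → ℝ) : ℝ :=
  (∫ x, f x ∂(R.toJordanDecomposition.posPart)) - ∫ x, f x ∂(R.toJordanDecomposition.negPart)

/-- The total variation norm of a finite signed measure: the total mass of its total
variation measure. -/
noncomputable def tvNorm {X : Type*} [MeasurableSpace X]
    (s : MeasureTheory.SignedMeasure X) : ℝ :=
  (s.totalVariation Set.univ).toReal

def truncate (t a : ℝ) : ℝ := max (-t) (min t a)

lemma continuous_truncate (t : ℝ) : Continuous (truncate t) :=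
  continuous_const.max (continuous_const.min continuous_id)

lemma abs_truncate_le {t : ℝ} (ht : 0 ≤ t) (a : ℝ) : |truncate t a| ≤ t :=
  abs_le.mpr ⟨le_max_left _ _, max_le (by linarith) (min_le_left _ _)⟩

lemma abs_sub_truncate_mul_le_sq {t : ℝ} (ht : 0 ≤ t) (a : ℝ) : |a - truncate t a| * t ≤ a ^ 2 := by
  rcases le_total t a with hta | hat
  · rw [truncate, min_eq_left hta, max_eq_right (by linarith), abs_of_nonneg (by linarith)]
    nlinarith
  rcases le_total a (-t) with hat' | hta'
  · rw [truncate, min_eq_right (by linarith), max_eq_left hat', abs_of_nonpos (by linarith)]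
    nlinarith
  · rw [truncate, min_eq_right hat, max_eq_right hta', sub_self, abs_zero, zero_mul]
    positivity

lemma le_two_mul_sqrt_mul_of_forall_le_mul_add_div {A a b : ℝ} (ha : 0 ≤ a) (hb : 0 ≤ b)
    (h : ∀ t, 0 < t → A ≤ t * a + b / t) : A ≤ 2 * √(b * a) := by
  obtain ⟨x, hx, rfl⟩ : ∃ x, 0 ≤ x ∧ x ^ 2 = a := ⟨√a, Real.sqrt_nonneg a, Real.sq_sqrt ha⟩
  obtain ⟨y, hy, rfl⟩ : ∃ y, 0 ≤ y ∧ y ^ 2 = b := ⟨√b, Real.sqrt_nonneg b, Real.sq_sqrt hb⟩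
  rw [← mul_pow, Real.sqrt_sq (by positivity)]
  refine le_of_forall_pos_le_add fun ε hε => ?_
  -- `t = y / x` would be optimal; the perturbation by `η` handles `x = 0` or `y = 0`.
  set η := ε / (x + y + 1)
  have hη : 0 < η := by positivity
  have hxη : 0 < x + η := by positivity
  have hyη : 0 < y + η := by positivity
  calc A ≤ (y + η) / (x + η) * x ^ 2 + y ^ 2 / ((y + η) / (x + η)) := h _ (by positivity)
    _ ≤ (y + η) * x + y * (x + η) := by
      rw [div_div_eq_mul_div, div_mul_eq_mul_div]
      gcongr
      · rw [div_le_iff₀ hxη]; nlinarith [mul_nonneg (mul_nonneg hyη.le hx) hη.le]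
      · rw [div_le_iff₀ hyη]; nlinarith [mul_nonneg (mul_nonneg hy hxη.le) hη.le]
    _ = 2 * (y * x) + η * (x + y) := by ring
    _ ≤ 2 * (y * x) + ε := by
      have : η * (x + y + 1) = ε := div_mul_cancel₀ _ (by positivity)
      nlinarith

section

variable {X : Type*} [MeasurableSpace X]

lemma MeasureTheory.Measure.add_eq_add_of_toSignedMeasure_sub_eq {μ₁ μ₂ ν₁ ν₂ : Measure X}
    [IsFiniteMeasure μ₁] [IsFiniteMeasure μ₂] [IsFiniteMeasure ν₁] [IsFiniteMeasure ν₂]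
    (h : μ₁.toSignedMeasure - μ₂.toSignedMeasure = ν₁.toSignedMeasure - ν₂.toSignedMeasure) :
    μ₁ + ν₂ = ν₁ + μ₂ := by
  rw [← Measure.toSignedMeasure_eq_toSignedMeasure_iff, Measure.toSignedMeasure_add,
    Measure.toSignedMeasure_add]
  exact sub_eq_sub_iff_add_eq_add.mp h

lemma tvNorm_eq (s : SignedMeasure X) :
    tvNorm s = s.toJordanDecomposition.posPart.real Set.univ +
      s.toJordanDecomposition.negPart.real Set.univ :=
  ENNReal.toReal_add (measure_ne_top _ _) (measure_ne_top _ _)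

lemma abs_signedIntegral_le_mul_tvNorm (s : SignedMeasure X) {f : X → ℝ} {C : ℝ}
    (hC : ∀ x, |f x| ≤ C) : |signedIntegral s f| ≤ C * tvNorm s := by
  have hbound : ∀ μ : Measure X, ∀ᵐ x ∂μ, ‖f x‖ ≤ C := fun μ => ae_of_all μ hC
  calc |signedIntegral s f|
      ≤ |∫ x, f x ∂(s.toJordanDecomposition.posPart)| +
          |∫ x, f x ∂(s.toJordanDecomposition.negPart)| := abs_sub _ _
    _ ≤ C * s.toJordanDecomposition.posPart.real Set.univ +
        C * s.toJordanDecomposition.negPart.real Set.univ :=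
        add_le_add (norm_integral_le_of_norm_le_const (hbound _))
          (norm_integral_le_of_norm_le_const (hbound _))
    _ = C * tvNorm s := by rw [tvNorm_eq, mul_add]

lemma integral_sub_signedIntegral_eq_signedIntegral_sub (Q : Measure X) [IsFiniteMeasure Q]
    (R : SignedMeasure X) {f : X → ℝ} (hf : StronglyMeasurable f) {C : ℝ}
    (hC : ∀ x, |f x| ≤ C) :
    (∫ x, f x ∂Q) - signedIntegral R f = signedIntegral (Q.toSignedMeasure - R) f := by
  have hint : ∀ (μ : Measure X) [IsFiniteMeasure μ], Integrable f μ := fun μ _ =>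
    .of_bound hf.aestronglyMeasurable C (ae_of_all μ hC)
  set P := Q.toSignedMeasure - R
  set Rp := R.toJordanDecomposition.posPart
  set Rn := R.toJordanDecomposition.negPart
  have hR : Rp.toSignedMeasure - Rn.toSignedMeasure = R := R.toSignedMeasure_toJordanDecomposition
  have key : P.toJordanDecomposition.posPart + Rp = (Q + Rn) + P.toJordanDecomposition.negPart := by
    refine Measure.add_eq_add_of_toSignedMeasure_sub_eq ?_
    calc _ = Q.toSignedMeasure - R := P.toSignedMeasure_toJordanDecomposition
      _ = Q.toSignedMeasure - (Rp.toSignedMeasure - Rn.toSignedMeasure) := by rw [hR]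
      _ = _ := by rw [Measure.toSignedMeasure_add]; abel
  have hkey := congrArg (fun μ => ∫ x, f x ∂μ) key
  simp only [integral_add_measure (hint _) (hint _)] at hkey
  rw [signedIntegral, signedIntegral]
  linarith

lemma signedIntegral_sub (R : SignedMeasure X) {f g : X → ℝ} (hf : Integrable f R.totalVariation)
    (hg : Integrable g R.totalVariation) :
    signedIntegral R (fun x => f x - g x) = signedIntegral R f - signedIntegral R g := by
  obtain ⟨hfp, hfn⟩ := integrable_add_measure.mp hf
  obtain ⟨hgp, hgn⟩ := integrable_add_measure.mp hg
  rw [signedIntegral, signedIntegral, signedIntegral, integral_sub hfp hgp, integral_sub hfn hgn]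
  ring

lemma abs_signedIntegral_le_integral_abs (R : SignedMeasure X) {f : X → ℝ}
    (hf : Integrable f R.totalVariation) :
    |signedIntegral R f| ≤ ∫ x, |f x| ∂(R.totalVariation) := by
  obtain ⟨hfp, hfn⟩ := integrable_add_measure.mp hf
  calc |signedIntegral R f|
      ≤ |∫ x, f x ∂(R.toJordanDecomposition.posPart)| +
          |∫ x, f x ∂(R.toJordanDecomposition.negPart)| := abs_sub _ _
    _ ≤ (∫ x, |f x| ∂(R.toJordanDecomposition.posPart)) +
        ∫ x, |f x| ∂(R.toJordanDecomposition.negPart) :=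
        add_le_add abs_integral_le_integral_abs abs_integral_le_integral_abs
    _ = ∫ x, |f x| ∂(R.totalVariation) := (integral_add_measure hfp.abs hfn.abs).symm

lemma integrable_sq_and_integral_sq_le {μ : Measure X} {f : X → ℝ} (hf : AEStronglyMeasurable f μ)
    {M : ℝ} (hM : 0 ≤ M) (h : ∫⁻ x, ENNReal.ofReal (f x ^ 2) ∂μ ≤ ENNReal.ofReal M) :
    Integrable (fun x => f x ^ 2) μ ∧ ∫ x, f x ^ 2 ∂μ ≤ M := by
  have hnonneg : 0 ≤ᵐ[μ] fun x => f x ^ 2 := ae_of_all μ fun x => sq_nonneg (f x)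
  have hint : Integrable (fun x => f x ^ 2) μ :=
    ⟨hf.pow 2, (hasFiniteIntegral_iff_ofReal hnonneg).mpr (h.trans_lt ENNReal.ofReal_lt_top)⟩
  refine ⟨hint, ?_⟩
  rwa [← ENNReal.ofReal_le_ofReal_iff hM, ofReal_integral_eq_lintegral_ofReal hint hnonneg]

lemma integral_abs_sub_truncate_le {μ : Measure X} {f : X → ℝ} (hf : AEStronglyMeasurable f μ)
    {M : ℝ} (hM : 0 ≤ M) (h : ∫⁻ x, ENNReal.ofReal (f x ^ 2) ∂μ ≤ ENNReal.ofReal M)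
    {t : ℝ} (ht : 0 < t) :
    ∫ x, |f x - truncate t (f x)| ∂μ ≤ M / t := by
  obtain ⟨hint, hle⟩ := integrable_sq_and_integral_sq_le hf hM h
  calc ∫ x, |f x - truncate t (f x)| ∂μ ≤ ∫ x, f x ^ 2 / t ∂μ :=
        integral_mono_of_nonneg (ae_of_all μ fun x => abs_nonneg _) (hint.div_const t)
          (ae_of_all μ fun x => (le_div_iff₀ ht).mpr (abs_sub_truncate_mul_le_sq ht.le (f x)))
    _ = (∫ x, f x ^ 2 ∂μ) / t := integral_div t _
    _ ≤ M / t := by gcongr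

theorem abs_integral_sub_signedIntegral_le (Q : Measure X) [IsFiniteMeasure Q]
    (R : SignedMeasure X) {f : X → ℝ} (hf : StronglyMeasurable f) {M : ℝ} (hM : 0 ≤ M)
    (hQ : ∫⁻ x, ENNReal.ofReal (f x ^ 2) ∂Q ≤ ENNReal.ofReal M)
    (hR : ∫⁻ x, ENNReal.ofReal (f x ^ 2) ∂(R.totalVariation) ≤ ENNReal.ofReal M)
    {t : ℝ} (ht : 0 < t) :
    |(∫ x, f x ∂Q) - signedIntegral R f| ≤ t * tvNorm (Q.toSignedMeasure - R) + 2 * M / t := by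
  set g := fun x => truncate t (f x)
  have hg : StronglyMeasurable g := (continuous_truncate t).comp_stronglyMeasurable hf
  have hgC : ∀ x, |g x| ≤ t := fun x => abs_truncate_le ht.le (f x)
  have hgint : ∀ (μ : Measure X) [IsFiniteMeasure μ], Integrable g μ := fun μ _ =>
    .of_bound hg.aestronglyMeasurable t (ae_of_all μ hgC)
  have hfint : ∀ (μ : Measure X) [IsFiniteMeasure μ],
      ∫⁻ x, ENNReal.ofReal (f x ^ 2) ∂μ ≤ ENNReal.ofReal M → Integrable f μ := fun μ _ h =>
    ((memLp_two_iff_integrable_sq hf.aestronglyMeasurable).mpr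
      (integrable_sq_and_integral_sq_le hf.aestronglyMeasurable hM h).1).integrable one_le_two
  have hbulk : |(∫ x, g x ∂Q) - signedIntegral R g| ≤ t * tvNorm (Q.toSignedMeasure - R) := by
    rw [integral_sub_signedIntegral_eq_signedIntegral_sub Q R hg hgC]
    exact abs_signedIntegral_le_mul_tvNorm _ hgC
  have hQtail : |(∫ x, f x ∂Q) - ∫ x, g x ∂Q| ≤ M / t := by
    rw [← integral_sub (hfint Q hQ) (hgint Q)]
    exact abs_integral_le_integral_abs.trans
      (integral_abs_sub_truncate_le hf.aestronglyMeasurable hM hQ ht)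
  have hRtail : |signedIntegral R f - signedIntegral R g| ≤ M / t := by
    rw [← signedIntegral_sub R (hfint _ hR) (hgint _)]
    exact (abs_signedIntegral_le_integral_abs R ((hfint _ hR).sub (hgint _))).trans
      (integral_abs_sub_truncate_le hf.aestronglyMeasurable hM hR ht)
  have hsplit : 2 * M / t = M / t + M / t := by ring
  rw [abs_le] at hbulk hQtail hRtail ⊢
  constructor <;> linarith

end

theorem stmt_8_general {d : ℕ}
    (Q : Measure (EuclideanSpace ℝ (Fin d))) [IsProbabilityMeasure Q]
    (R : MeasureTheory.SignedMeasure (EuclideanSpace ℝ (Fin d)))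
    (M : ℝ) (hM : 0 ≤ M)
    (hQmom : (∫⁻ x, ENNReal.ofReal (‖x‖ ^ 2) ∂Q) ≤ ENNReal.ofReal M)
    (hRmom : (∫⁻ x, ENNReal.ofReal (‖x‖ ^ 2) ∂(R.totalVariation)) ≤ ENNReal.ofReal M) :
    ∀ β : EuclideanSpace ℝ (Fin d), ‖β‖ ≤ 1 →
      (∀ t : ℝ, 0 < t →
        |(∫ x, ⟪β, x⟫ ∂Q) - signedIntegral R (fun x => ⟪β, x⟫)| ≤
          t * tvNorm (Q.toSignedMeasure - R) + 2 * M / t) ∧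
      |(∫ x, ⟪β, x⟫ ∂Q) - signedIntegral R (fun x => ⟪β, x⟫)| ≤
        2 * Real.sqrt (2 * M * tvNorm (Q.toSignedMeasure - R)) := by
  intro β hβ
  have hsq : ∀ x, ENNReal.ofReal (⟪β, x⟫ ^ 2) ≤ ENNReal.ofReal (‖x‖ ^ 2) := fun x =>
    ENNReal.ofReal_le_ofReal <| sq_le_sq.mpr <| (abs_norm x).symm ▸
      (abs_real_inner_le_norm β x).trans (mul_le_of_le_one_left (norm_nonneg x) hβ)
  have hf : StronglyMeasurable fun x : EuclideanSpace ℝ (Fin d) => ⟪β, x⟫ :=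
    (continuous_const.inner continuous_id).stronglyMeasurable
  have bound := fun t (ht : 0 < t) => abs_integral_sub_signedIntegral_le Q R hf hM
    ((lintegral_mono hsq).trans hQmom) ((lintegral_mono hsq).trans hRmom) ht
  exact ⟨bound, le_two_mul_sqrt_mul_of_forall_le_mul_add_div
    (ENNReal.toReal_nonneg) (by positivity) bound⟩

/-- robustness of bounded-function balance for linear outcomes under a second
moment bound.  If `Q` is a probability measure and `R` a finite signed measure on `ℝ^d`
with `R(ℝ^d) = 1` and both second moments bounded by `M` (the one for `R` with respect to
its total variation measure `|R|`), then for every `‖β‖₂ ≤ 1` and `t > 0` the bias of the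
linear function `x ↦ ⟨β,x⟩` is at most `t·‖Q − R‖_TV + 2M/t`, hence at most
`2·√(2M·‖Q − R‖_TV)`. -/
theorem stmt_8 {d : ℕ} (hd : 1 ≤ d)
    (Q : Measure (EuclideanSpace ℝ (Fin d))) [IsProbabilityMeasure Q]
    (R : MeasureTheory.SignedMeasure (EuclideanSpace ℝ (Fin d)))
    (hR1 : R Set.univ = 1)
    (M : ℝ) (hM : 0 ≤ M)
    (hQmom : (∫⁻ x, ENNReal.ofReal (‖x‖ ^ 2) ∂Q) ≤ ENNReal.ofReal M)
    (hRmom : (∫⁻ x, ENNReal.ofReal (‖x‖ ^ 2) ∂(R.totalVariation)) ≤ ENNReal.ofReal M) :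
    ∀ β : EuclideanSpace ℝ (Fin d), ‖β‖ ≤ 1 →
      (∀ t : ℝ, 0 < t →
        |(∫ x, ⟪β, x⟫ ∂Q) - signedIntegral R (fun x => ⟪β, x⟫)| ≤
          t * tvNorm (Q.toSignedMeasure - R) + 2 * M / t) ∧
      |(∫ x, ⟪β, x⟫ ∂Q) - signedIntegral R (fun x => ⟪β, x⟫)| ≤
        2 * Real.sqrt (2 * M * tvNorm (Q.toSignedMeasure - R)) :=
  stmt_8_general Q R M hM hQmom hRmom
end

section
/- Let P and Q be probability measures on a measurable space X with Q ≪ P and dQ/dP ∈ L²(P), let μ > 0, and let F be a convex set of measurable functions with F ⊆ L²(P) ∩ L¹(Q) and f ∈ F ⟹ −f ∈ F. If the function g := (2/μ)·(dQ/dP) belongs to F, then g attains the supremum over f ∈ F of { E_Q[f] − E_P[f] − (μ/4)·Var_P[f] }, and the corresponding balancing weights satisfy 1 + (μ/2)(g − E_P[g]) = dQ/dP P-almost everywhere. -/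
open MeasureTheory

private lemma mul_integrable_of_memL2 {X : Type*} [MeasurableSpace X] {P : Measure X}
    {f r : X → ℝ} (hf : MemLp f 2 P) (hr : MemLp r 2 P) :
    Integrable (fun x => f x * r x) P := by
  have h1 := (hf.add hr).integrable_sq
  have h2 := hf.integrable_sq
  have h3 := hr.integrable_sq
  have h : Integrable (fun x => ((f x + r x) ^ 2 - f x ^ 2 - r x ^ 2) / 2) P :=
    ((h1.sub h2).sub h3).div_const 2
  exact h.congr (Filter.Eventually.of_forall fun x => by ring)

/-- when a rescaled density ratio belongs to the outcome class, the optimal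
balancing weights are exactly the importance weights.  If `Q ≪ P` with `dQ/dP ∈ L²(P)` and
`g := (2/μ)·(dQ/dP) ∈ F`, then `g` attains the supremum of
`E_Q[f] − E_P[f] − (μ/4)·Var_P[f]` over `F`, and `1 + (μ/2)(g − E_P[g]) = dQ/dP`
`P`-almost everywhere. -/
theorem stmt_10 {X : Type*} [MeasurableSpace X] (P Q : Measure X)
    [IsProbabilityMeasure P] [IsProbabilityMeasure Q]
    (hQP : Q ≪ P) (hrn : MemLp (fun x => (Q.rnDeriv P x).toReal) 2 P)
    (μ : ℝ) (hμ : 0 < μ)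
    (F : Set (X → ℝ)) (hconv : Convex ℝ F)
    (hF : ∀ f ∈ F, MemLp f 2 P ∧ Integrable f Q)
    (hsymm : ∀ f ∈ F, -f ∈ F)
    (obj : (X → ℝ) → ℝ)
    (hobj : obj = fun f => (∫ x, f x ∂Q) - (∫ x, f x ∂P)
      - (μ / 4) * ((∫ x, (f x) ^ 2 ∂P) - (∫ x, f x ∂P) ^ 2))
    (g : X → ℝ) (hg : g = fun x => (2 / μ) * (Q.rnDeriv P x).toReal)
    (hgF : g ∈ F) :
    -- g attains the supremum of the dual objective over F
    (∀ f ∈ F, obj f ≤ obj g) ∧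
    -- the corresponding balancing weights are the importance weights dQ/dP
    (fun x => 1 + (μ / 2) * (g x - ∫ x', g x' ∂P)) =ᵐ[P]
      fun x => (Q.rnDeriv P x).toReal := by
  set r : X → ℝ := fun x => (Q.rnDeriv P x).toReal with hrdef
  have hμ0 : μ ≠ 0 := ne_of_gt hμ
  have hrint1 : ∫ x, r x ∂P = 1 := by
    rw [hrdef, Measure.integral_toReal_rnDeriv hQP]
    simp
  -- basic integrability
  have hrInt : Integrable r P := hrn.integrable one_le_two
  have hr2i : Integrable (fun x => r x ^ 2) P := hrn.integrable_sq
  -- integrals of g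
  have hgintP : ∫ x, g x ∂P = 2 / μ := by
    rw [hg, integral_const_mul, hrint1, mul_one]
  -- change of variables for Q-integrals
  have hQint : ∀ f : X → ℝ, ∫ x, f x ∂Q = ∫ x, r x * f x ∂P := by
    intro f
    rw [← integral_rnDeriv_smul hQP]
    simp [hrdef, smul_eq_mul]
  -- abbreviations
  set m2 : ℝ := ∫ x, r x ^ 2 ∂P with hm2
  have hgintQ : ∫ x, g x ∂Q = (2 / μ) * m2 := by
    rw [hQint, hg, hm2]
    rw [← integral_const_mul]
    congr 1; funext x; ring
  have hgsq : ∫ x, (g x) ^ 2 ∂P = (2 / μ) ^ 2 * m2 := by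
    rw [hg, hm2, ← integral_const_mul]
    congr 1; funext x; ring
  have hobjg : obj g = (2 / μ) * m2 - 2 / μ
      - (μ / 4) * ((2 / μ) ^ 2 * m2 - (2 / μ) ^ 2) := by
    rw [hobj]
    simp only [hgintQ, hgintP, hgsq]
  constructor
  · intro f hfF
    obtain ⟨hf2, hfQ⟩ := hF f hfF
    have hf1 : Integrable f P := hf2.integrable one_le_two
    have hf2i : Integrable (fun x => f x ^ 2) P := hf2.integrable_sq
    have hfr : Integrable (fun x => r x * f x) P := by
      have := mul_integrable_of_memL2 hf2 hrn
      exact this.congr (Filter.Eventually.of_forall fun x => by ring)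
    set Ef : ℝ := ∫ x, f x ∂P with hEf
    set Sf : ℝ := ∫ x, f x ^ 2 ∂P with hSf
    set Cfr : ℝ := ∫ x, r x * f x ∂P with hCfr
    set c : ℝ := 2 / μ with hc
    set d : ℝ := Ef - c with hd
    -- nonnegative quadratic
    set h : X → ℝ := fun x => f x - c * r x - d with hh
    have hnn : 0 ≤ ∫ x, (h x) ^ 2 ∂P := integral_nonneg fun x => sq_nonneg _
    have hexp : ∀ x, (h x) ^ 2 =
        (f x ^ 2 + c ^ 2 * r x ^ 2 - 2 * c * (r x * f x))
          - (2 * d * f x - 2 * (c * d) * r x) + d ^ 2 := by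
      intro x; simp only [hh]; ring
    have i1 : Integrable (fun x => c ^ 2 * r x ^ 2) P := hr2i.const_mul _
    have i2 : Integrable (fun x => 2 * c * (r x * f x)) P := hfr.const_mul _
    have i3 : Integrable (fun x => 2 * d * f x) P := hf1.const_mul _
    have i4 : Integrable (fun x => 2 * (c * d) * r x) P := hrInt.const_mul _
    have iA : Integrable (fun x => f x ^ 2 + c ^ 2 * r x ^ 2) P := hf2i.add i1
    have iB : Integrable (fun x => f x ^ 2 + c ^ 2 * r x ^ 2 - 2 * c * (r x * f x)) P :=
      iA.sub i2
    have iC : Integrable (fun x => 2 * d * f x - 2 * (c * d) * r x) P := i3.sub i4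
    have iD : Integrable (fun x => f x ^ 2 + c ^ 2 * r x ^ 2 - 2 * c * (r x * f x)
        - (2 * d * f x - 2 * (c * d) * r x)) P := iB.sub iC
    have hI : ∫ x, (h x) ^ 2 ∂P =
        (Sf + c ^ 2 * m2 - 2 * c * Cfr) - (2 * d * Ef - 2 * (c * d) * 1) + d ^ 2 := by
      simp only [hexp]
      rw [integral_add iD (integrable_const _), integral_sub iB iC,
        integral_sub iA i2, integral_add hf2i i1, integral_sub i3 i4, integral_const,
        integral_const_mul, integral_const_mul, integral_const_mul, integral_const_mul, hrint1]
      simp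
      rfl
    have hobjf : obj f = Cfr - Ef - (μ / 4) * (Sf - Ef ^ 2) := by
      rw [hobj]
      simp only [hQint f, ← hCfr, ← hEf, ← hSf]
    have hkey : obj g - obj f = (μ / 4) * ∫ x, (h x) ^ 2 ∂P := by
      rw [hobjg, hobjf, hI, hd, hc]
      field_simp
      ring
    nlinarith [mul_nonneg (by linarith : (0:ℝ) ≤ μ / 4) hnn]
  · have heq : (fun x => 1 + (μ / 2) * (g x - ∫ x', g x' ∂P)) = r := by
      funext x
      rw [hgintP, hg]
      simp only [hrdef]
      field_simp
      ring
    rw [heq]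
end

section
/- Let P be a probability measure on a measurable space X, let f ∈ L²(P), let μ > 0, and suppose λ* ∈ ℝ satisfies E_P[(μ/2)·max(f − λ*, 0)] = 1. Then among all (nonnegative) finite measures R on X with R ≪ P, R(X) = 1, and dR/dP ∈ L²(P), the functional R ↦ (1/μ)·D₂(R‖P) − ∫ f dR is minimized at the measure R* with dR*/dP = (μ/2)·max(f − λ*, 0). -/
/-!
Adding the multiplier term `λ* (∫ w dP - 1)`, which vanishes on normalized densities, turns the
objective into the integral of the pointwise Lagrangian `w² / μ - (f - λ*) w`, up to a constant.
For each `x` this quadratic in `w ≥ 0` is minimized at `(μ / 2) max (f x - λ*) 0 = w* x`, so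
integrating the pointwise inequality gives minimality; the hypothesis on `λ*` makes `w*` feasible.
-/

open MeasureTheory

theorem inv_mul_sq_sub_mul_le_of_nonneg {μ : ℝ} (hμ : 0 < μ) (a : ℝ) {b : ℝ} (hb : 0 ≤ b) :
    (1 / μ) * (μ / 2 * max a 0) ^ 2 - a * (μ / 2 * max a 0) ≤ (1 / μ) * b ^ 2 - a * b := by
  rcases le_or_gt a 0 with ha | ha
  · rw [max_eq_right ha]
    nlinarith [mul_nonpos_of_nonpos_of_nonneg ha hb, show 0 ≤ (1 / μ) * b ^ 2 by positivity]
  · rw [max_eq_left ha.le]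
    have hsquare : (1 / μ) * b ^ 2 - a * b - ((1 / μ) * (μ / 2 * a) ^ 2 - a * (μ / 2 * a))
        = (1 / μ) * (b - μ / 2 * a) ^ 2 := by
      field_simp
      ring
    nlinarith [show 0 ≤ (1 / μ) * (b - μ / 2 * a) ^ 2 by positivity]

section Lagrangian

variable {X : Type*} [MeasurableSpace X] {P : Measure X}

theorem MeasureTheory.MemLp.max_sub_const_zero [IsFiniteMeasure P] {f : X → ℝ}
    (hf : MemLp f 2 P) (c : ℝ) : MemLp (fun x => max (f x - c) 0) 2 P :=
  (hf.sub (memLp_const c)).sup MemLp.zero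

theorem integrable_lagrangian [IsFiniteMeasure P] {f v : X → ℝ} (hf : MemLp f 2 P)
    (hv : MemLp v 2 P) (μ c : ℝ) :
    Integrable (fun x => (1 / μ) * v x ^ 2 - (f x - c) * v x) P :=
  (hv.integrable_sq.const_mul _).sub ((hf.sub (memLp_const c)).integrable_mul hv)

theorem chiSq_objective_eq_integral_lagrangian [IsProbabilityMeasure P] {f v : X → ℝ}
    (hf : MemLp f 2 P) (hv : MemLp v 2 P) (μ c : ℝ) :
    (1 / μ) * ∫ x, (v x ^ 2 - 1) ∂P - ∫ x, f x * v x ∂P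
      = ∫ x, ((1 / μ) * v x ^ 2 - (f x - c) * v x) ∂P - c * ∫ x, v x ∂P - 1 / μ := by
  have hv2 : Integrable (fun x => v x ^ 2) P := hv.integrable_sq
  have hfv : Integrable (fun x => f x * v x) P := hf.integrable_mul hv
  have hcv : Integrable (fun x => c * v x) P := (hv.integrable one_le_two).const_mul c
  have hfcv : Integrable (fun x => f x * v x - c * v x) P := hfv.sub hcv
  have hsplit : (fun x => (1 / μ) * v x ^ 2 - (f x - c) * v x)
      = fun x => (1 / μ) * v x ^ 2 - (f x * v x - c * v x) := by
    funext x
    ring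
  rw [hsplit, integral_sub (hv2.const_mul _) hfcv, integral_sub hfv hcv,
    integral_sub hv2 (integrable_const 1), integral_const_mul, integral_const_mul]
  simp only [integral_const, probReal_univ, smul_eq_mul, mul_one]
  ring

end Lagrangian

/-- the balancing-weights dual with nonnegative weights.  Nonnegative finite
measures `R ≪ P` with `R(X) = 1` and `dR/dP ∈ L²(P)` are encoded by their densities
`w = dR/dP ≥ 0` (P-a.e.), so `∫ f dR = ∫ f·w dP` and `D₂(R‖P) = ∫ (w² − 1) dP`.  If
`λ*` satisfies `E_P[(μ/2)·max(f − λ*, 0)] = 1`, then the functional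
`R ↦ (1/μ)·D₂(R‖P) − ∫ f dR` is minimized over this class at the measure with density
`w* = (μ/2)·max(f − λ*, 0)`. -/
theorem stmt_12 {X : Type*} [MeasurableSpace X] (P : Measure X) [IsProbabilityMeasure P]
    (f : X → ℝ) (hf : MemLp f 2 P) (μ : ℝ) (hμ : 0 < μ)
    (lamstar : ℝ)
    (hlam : (∫ x, (μ / 2) * max (f x - lamstar) 0 ∂P) = 1)
    (wstar : X → ℝ) (hwstar : wstar = fun x => (μ / 2) * max (f x - lamstar) 0)
    (J : (X → ℝ) → ℝ)
    (hJ : J = fun w => (1 / μ) * (∫ x, ((w x) ^ 2 - 1) ∂P) - ∫ x, f x * w x ∂P) :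
    -- w* is a feasible density: nonnegative, L², and normalized
    ((∀ x, 0 ≤ wstar x) ∧ MemLp wstar 2 P ∧ (∫ x, wstar x ∂P) = 1) ∧
    -- minimality among all nonnegative feasible densities
    (∀ w : X → ℝ, 0 ≤ᵐ[P] w → MemLp w 2 P → (∫ x, w x ∂P) = 1 → J wstar ≤ J w) := by
  subst hwstar hJ
  have hmem : MemLp (fun x => μ / 2 * max (f x - lamstar) 0) 2 P :=
    (hf.max_sub_const_zero lamstar).const_mul _
  refine ⟨⟨fun x => by positivity, hmem, hlam⟩, fun w hw0 hw2 hw1 => ?_⟩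
  have hmono := integral_mono_ae (integrable_lagrangian hf hmem μ lamstar)
    (integrable_lagrangian hf hw2 μ lamstar)
    (by filter_upwards [hw0] with x hx using inv_mul_sq_sub_mul_le_of_nonneg hμ _ hx)
  dsimp only
  rw [chiSq_objective_eq_integral_lagrangian hf hmem μ lamstar,
    chiSq_objective_eq_integral_lagrangian hf hw2 μ lamstar, hlam, hw1]
  linarith
end

section
/- Let P and Q be probability measures on a measurable space X and let F be a convex set of measurable functions with F ⊆ L²(P) ∩ L¹(Q), f ∈ F ⟹ −f ∈ F, closed and bounded as a subset of L²(P). Let δ_min be the infimum of IPM_F(Q, R) over all finite signed measures R with R ≪ P, dR/dP ∈ L²(P), and R(X) = 1, and let δ > δ_min. Suppose R* attains the infimum of D₂(R‖P) over all such R satisfying additionally IPM_F(Q, R) ≤ δ. Then there exists μ ≥ 0 such that μ·(IPM_F(Q, R*) − δ) = 0 and, for every finite signed measure R with R ≪ P, dR/dP ∈ L²(P), and R(X) = 1, D₂(R*‖P) + μ·IPM_F(Q, R*) ≤ D₂(R‖P) + μ·IPM_F(Q, R). -/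
/-!
The IPM is a supremum of functionals affine in the density `w`, and it is finite on all of
`L²(P)` once it is finite at `w*`, because `F` is bounded in `L²(P)` (Cauchy–Schwarz). So the
problem is a convex program in `w` with a single real convex constraint `r w ≤ δ`, and the
IPM-infimum hypothesis supplies a Slater point. For such a program the multiplier is the
supremum of `0` and the slopes `(D w* - D w) / (r w - δ)` over `r w > δ`: evaluating `r` and `D`
on the segment from such a `w` to a point `y` with `r y < δ` shows that each of these slopes is
at most `(D y - D w*) / (δ - r y)`.
-/

open MeasureTheory

section Lagrange

variable {E : Type*} [AddCommGroup E] [Module ℝ E] {S : Set E} {D r : E → ℝ} {δ : ℝ} {x₀ : E}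

theorem ConvexOn.sub_div_le_sub_div_of_constrained_min (hD : ConvexOn ℝ S D)
    (hr : ConvexOn ℝ S r) (hmin : ∀ x ∈ S, r x ≤ δ → D x₀ ≤ D x) {x y : E} (hx : x ∈ S)
    (hy : y ∈ S) (hxδ : δ < r x) (hyδ : r y < δ) :
    (D x₀ - D x) / (r x - δ) ≤ (D y - D x₀) / (δ - r y) := by
  set a := r x - δ
  set b := δ - r y
  have ha : 0 < a := sub_pos.2 hxδ
  have hb : 0 < b := sub_pos.2 hyδ
  have hs : 0 ≤ b / (a + b) := by positivity
  have ht : 0 ≤ a / (a + b) := by positivity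
  have hab : 0 < a + b := add_pos ha hb
  have hst : b / (a + b) + a / (a + b) = 1 := by rw [← add_div, add_comm, div_self hab.ne']
  have hcomb : ∀ u v : ℝ, b / (a + b) * u + a / (a + b) * v = (b * u + a * v) / (a + b) := by
    intro u v
    ring
  -- the point of the segment `[x, y]` where the affine interpolation of `r` equals `δ`
  set z := (b / (a + b)) • x + (a / (a + b)) • y
  have hrz : r z ≤ δ := by
    refine (hr.2 hx hy hs ht hst).trans_eq ?_
    rw [smul_eq_mul, smul_eq_mul, hcomb, div_eq_iff hab.ne']
    ring
  have hDz : D x₀ ≤ b / (a + b) * D x + a / (a + b) * D y :=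
    (hmin z (hD.1 hx hy hs ht hst) hrz).trans (hD.2 hx hy hs ht hst)
  rw [hcomb, le_div_iff₀ hab] at hDz
  rw [div_le_div_iff₀ ha hb]
  linarith

theorem ConvexOn.exists_nonneg_forall_add_mul_le (hD : ConvexOn ℝ S D) (hr : ConvexOn ℝ S r)
    (hmin : ∀ x ∈ S, r x ≤ δ → D x₀ ≤ D x) (hslater : ∃ y ∈ S, r y < δ) :
    ∃ μ : ℝ, 0 ≤ μ ∧ ∀ x ∈ S, D x₀ + μ * δ ≤ D x + μ * r x := by
  obtain ⟨y, hy, hyδ⟩ := hslater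
  -- `μ` must dominate these ratios and be dominated by the ratios with `r x < δ`
  set A := insert 0 ((fun x => (D x₀ - D x) / (r x - δ)) '' {x ∈ S | δ < r x})
  have hA : ∀ x ∈ S, r x < δ → ∀ q ∈ A, q ≤ (D x - D x₀) / (δ - r x) := by
    rintro x hx hxδ q (rfl | ⟨z, ⟨hz, hzδ⟩, rfl⟩)
    · exact div_nonneg (sub_nonneg.2 (hmin x hx hxδ.le)) (sub_pos.2 hxδ).le
    · exact hD.sub_div_le_sub_div_of_constrained_min hr hmin hz hx hzδ hxδ
  have hbdd : BddAbove A := ⟨_, hA y hy hyδ⟩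
  refine ⟨sSup A, le_csSup hbdd (Set.mem_insert 0 _), fun x hx => ?_⟩
  rcases lt_trichotomy (r x) δ with hxδ | hxδ | hxδ
  · have h := csSup_le (Set.insert_nonempty _ _) (hA x hx hxδ)
    rw [le_div_iff₀ (sub_pos.2 hxδ)] at h
    linarith
  · rw [hxδ]
    linarith [hmin x hx hxδ.le]
  · have h := le_csSup hbdd (Set.mem_insert_of_mem _ ⟨x, ⟨hx, hxδ⟩, rfl⟩)
    rw [div_le_iff₀ (sub_pos.2 hxδ)] at h
    linarith

theorem ConvexOn.exists_lagrange_multiplier (hD : ConvexOn ℝ S D) (hr : ConvexOn ℝ S r)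
    (hx₀ : x₀ ∈ S) (hx₀δ : r x₀ ≤ δ) (hmin : ∀ x ∈ S, r x ≤ δ → D x₀ ≤ D x)
    (hslater : ∃ y ∈ S, r y < δ) :
    ∃ μ : ℝ, 0 ≤ μ ∧ μ * (r x₀ - δ) = 0 ∧ ∀ x ∈ S, D x₀ + μ * r x₀ ≤ D x + μ * r x := by
  obtain ⟨μ, hμ, h⟩ := hD.exists_nonneg_forall_add_mul_le hr hmin hslater
  have hμr : μ * r x₀ ≤ μ * δ := mul_le_mul_of_nonneg_left hx₀δ hμ
  refine ⟨μ, hμ, ?_, fun x hx => by linarith [h x hx]⟩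
  linarith [h x₀ hx₀]

end Lagrange

section BalancingWeights

variable {X : Type*} [MeasurableSpace X] {P : Measure X}

theorem convex_setOf_memLp (p : ENNReal) : Convex ℝ {w : X → ℝ | MemLp w p P} :=
  fun _ hw₁ _ hw₂ a b _ _ _ => (hw₁.const_smul a).add (hw₂.const_smul b)

theorem convex_setOf_memLp_integral_eq [IsFiniteMeasure P] {p : ENNReal} (hp : 1 ≤ p) (c : ℝ) :
    Convex ℝ {w : X → ℝ | MemLp w p P ∧ ∫ x, w x ∂P = c} := by
  rintro w₁ ⟨hw₁, hc₁⟩ w₂ ⟨hw₂, hc₂⟩ a b ha hb hab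
  refine ⟨convex_setOf_memLp p hw₁ hw₂ ha hb hab, ?_⟩
  rw [Pi.add_def, integral_add ((hw₁.integrable hp).smul a) ((hw₂.integrable hp).smul b)]
  simp only [Pi.smul_apply]
  rw [integral_smul, integral_smul, hc₁, hc₂, smul_eq_mul, smul_eq_mul, ← add_mul, hab, one_mul]

/-- The χ² divergence `D₂(R‖P)` of the measure `R = w • P`. -/
noncomputable def chiSqDiv (P : Measure X) (w : X → ℝ) : ℝ := ∫ x, (w x ^ 2 - 1) ∂P

theorem convexOn_chiSqDiv [IsFiniteMeasure P] :
    ConvexOn ℝ {w : X → ℝ | MemLp w 2 P} (chiSqDiv P) := by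
  refine ⟨convex_setOf_memLp 2, fun w₁ hw₁ w₂ hw₂ a b ha hb hab => ?_⟩
  have hi₁ : Integrable (fun x => w₁ x ^ 2 - 1) P := hw₁.integrable_sq.sub (integrable_const 1)
  have hi₂ : Integrable (fun x => w₂ x ^ 2 - 1) P := hw₂.integrable_sq.sub (integrable_const 1)
  have hi : Integrable (fun x => (a • w₁ + b • w₂) x ^ 2 - 1) P :=
    (convex_setOf_memLp 2 hw₁ hw₂ ha hb hab).integrable_sq.sub (integrable_const 1)
  simp only [chiSqDiv, smul_eq_mul, ← integral_const_mul]
  rw [← integral_add (hi₁.const_mul a) (hi₂.const_mul b)]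
  refine integral_mono hi ((hi₁.const_mul a).add (hi₂.const_mul b)) fun x => ?_
  simp only [Pi.add_apply, Pi.smul_apply, smul_eq_mul]
  obtain rfl : b = 1 - a := by linarith
  nlinarith [mul_nonneg ha hb, sq_nonneg (w₁ x - w₂ x)]

theorem integral_mul_le_norm_toLp_mul_norm_toLp {f g : X → ℝ} (hf : MemLp f 2 P)
    (hg : MemLp g 2 P) : ∫ x, f x * g x ∂P ≤ ‖hf.toLp f‖ * ‖hg.toLp g‖ := by
  refine le_of_eq_of_le ?_ (real_inner_le_norm (hf.toLp f) (hg.toLp g))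
  rw [L2.inner_def]
  refine integral_congr_ae ?_
  filter_upwards [hf.coeFn_toLp, hg.coeFn_toLp] with x hfx hgx
  simp [hfx, hgx, mul_comm]

variable {Q : Measure X} {F : Set (X → ℝ)} {f w w₀ w₁ w₂ : X → ℝ}

/-- `∫ f dQ - ∫ f dR` for the measure `R = w • P`. -/
noncomputable def meanGap (P Q : Measure X) (f w : X → ℝ) : ℝ :=
  ∫ x, f x ∂Q - ∫ x, f x * w x ∂P

/-- The integral probability metric `IPM_F(Q, R)` for the measure `R = w • P`. -/
noncomputable def ipm (P Q : Measure X) (F : Set (X → ℝ)) (w : X → ℝ) : EReal :=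
  ⨆ f ∈ F, (meanGap P Q f w : EReal)

theorem meanGap_smul_add_smul (hf : MemLp f 2 P) (hw₁ : MemLp w₁ 2 P) (hw₂ : MemLp w₂ 2 P)
    {a b : ℝ} (hab : a + b = 1) :
    meanGap P Q f (a • w₁ + b • w₂) = a * meanGap P Q f w₁ + b * meanGap P Q f w₂ := by
  have h : ∫ x, f x * (a • w₁ + b • w₂) x ∂P
      = a * ∫ x, f x * w₁ x ∂P + b * ∫ x, f x * w₂ x ∂P := by
    simp only [Pi.add_apply, Pi.smul_apply, smul_eq_mul, mul_add, mul_left_comm (f _)]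
    have hi₁ : Integrable (fun x => f x * w₁ x) P := hf.integrable_mul hw₁
    have hi₂ : Integrable (fun x => f x * w₂ x) P := hf.integrable_mul hw₂
    rw [integral_add (hi₁.const_mul a) (hi₂.const_mul b), integral_const_mul, integral_const_mul]
  rw [meanGap, meanGap, meanGap, h]
  linear_combination -(∫ x, f x ∂Q) * hab

theorem meanGap_le_add_norm_mul_norm (hf : MemLp f 2 P) (hw₀ : MemLp w₀ 2 P)
    (hw : MemLp w 2 P) :
    meanGap P Q f w ≤ meanGap P Q f w₀ + ‖hf.toLp f‖ * ‖(hw₀.sub hw).toLp (w₀ - w)‖ := by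
  have h : meanGap P Q f w = meanGap P Q f w₀ + ∫ x, f x * (w₀ - w) x ∂P := by
    simp only [meanGap, Pi.sub_apply, mul_sub]
    have hi₀ : Integrable (fun x => f x * w₀ x) P := hf.integrable_mul hw₀
    have hi : Integrable (fun x => f x * w x) P := hf.integrable_mul hw
    rw [integral_sub hi₀ hi]
    ring
  rw [h]
  exact add_le_add_right (integral_mul_le_norm_toLp_mul_norm_toLp hf (hw₀.sub hw)) _

theorem meanGap_le_ipm (hf : f ∈ F) : (meanGap P Q f w : EReal) ≤ ipm P Q F w :=
  le_iSup₂ (f := fun f _ => (meanGap P Q f w : EReal)) f hf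

theorem bot_lt_ipm (hF : F.Nonempty) : ⊥ < ipm P Q F w :=
  (EReal.bot_lt_coe _).trans_le (meanGap_le_ipm hF.some_mem)

theorem ipm_lt_top (hF : ∀ f ∈ F, MemLp f 2 P)
    (hbdd : Bornology.IsBounded {g : Lp ℝ 2 P | ∃ f ∈ F, (g : X → ℝ) =ᵐ[P] f})
    (hw₀ : MemLp w₀ 2 P) {c : ℝ} (h₀ : ipm P Q F w₀ ≤ c) (hw : MemLp w 2 P) :
    ipm P Q F w < ⊤ := by
  obtain ⟨C, hC⟩ := hbdd.exists_norm_le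
  refine (iSup₂_le fun f hf => ?_).trans_lt (EReal.coe_lt_top (c + C * ‖(hw₀.sub hw).toLp _‖))
  have hc : meanGap P Q f w₀ ≤ c := EReal.coe_le_coe_iff.1 ((meanGap_le_ipm hf).trans h₀)
  have hCf : ‖(hF f hf).toLp f‖ ≤ C := hC _ ⟨f, hf, (hF f hf).coeFn_toLp⟩
  refine EReal.coe_le_coe_iff.2 ((meanGap_le_add_norm_mul_norm (hF f hf) hw₀ hw).trans ?_)
  gcongr

theorem convexOn_of_ipm_eq_coe (hF : ∀ f ∈ F, MemLp f 2 P) {r : (X → ℝ) → ℝ}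
    (hr : ∀ w, MemLp w 2 P → ipm P Q F w = r w) :
    ConvexOn ℝ {w : X → ℝ | MemLp w 2 P} r := by
  refine ⟨convex_setOf_memLp 2, fun w₁ hw₁ w₂ hw₂ a b ha hb hab => ?_⟩
  rw [← EReal.coe_le_coe_iff, ← hr _ (convex_setOf_memLp 2 hw₁ hw₂ ha hb hab)]
  refine iSup₂_le fun f hf => ?_
  have hle : ∀ w, MemLp w 2 P → meanGap P Q f w ≤ r w := fun w hw =>
    EReal.coe_le_coe_iff.1 ((meanGap_le_ipm hf).trans_eq (hr w hw))
  rw [meanGap_smul_add_smul (hF f hf) hw₁ hw₂ hab, EReal.coe_le_coe_iff, smul_eq_mul, smul_eq_mul]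
  gcongr
  exacts [hle w₁ hw₁, hle w₂ hw₂]

end BalancingWeights

theorem stmt_16_general {X : Type*} [MeasurableSpace X] (P Q : Measure X)
    [IsProbabilityMeasure P]
    (F : Set (X → ℝ))
    (hF : ∀ f ∈ F, MemLp f 2 P ∧ Integrable f Q)
    (hbdd : Bornology.IsBounded {g : Lp ℝ 2 P | ∃ f ∈ F, (g : X → ℝ) =ᵐ[P] f})
    (IPM : (X → ℝ) → EReal)
    (hIPM : IPM = fun w => ⨆ f ∈ F, (((∫ x, f x ∂Q) - ∫ x, f x * w x ∂P : ℝ) : EReal))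
    (D2 : (X → ℝ) → ℝ) (hD2 : D2 = fun w => ∫ x, ((w x) ^ 2 - 1) ∂P)
    (δmin : EReal)
    (hδmin : δmin = ⨅ w ∈ {w : X → ℝ | MemLp w 2 P ∧ (∫ x, w x ∂P) = 1}, IPM w)
    (δ : ℝ) (hδ : δmin < (δ : EReal))
    (wstar : X → ℝ) (hw2 : MemLp wstar 2 P) (hw1 : (∫ x, wstar x ∂P) = 1)
    (hwipm : IPM wstar ≤ (δ : EReal))
    (hmin : ∀ w : X → ℝ, MemLp w 2 P → (∫ x, w x ∂P) = 1 → IPM w ≤ (δ : EReal) →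
      D2 wstar ≤ D2 w) :
    ∃ μ : ℝ, 0 ≤ μ ∧
      -- complementary slackness
      (μ : EReal) * (IPM wstar - (δ : EReal)) = 0 ∧
      -- optimality for the penalized problem over all feasible densities
      (∀ w : X → ℝ, MemLp w 2 P → (∫ x, w x ∂P) = 1 →
        ((D2 wstar : ℝ) : EReal) + (μ : EReal) * IPM wstar ≤
          ((D2 w : ℝ) : EReal) + (μ : EReal) * IPM w) := by
  obtain rfl : IPM = ipm P Q F := hIPM
  obtain rfl : D2 = chiSqDiv P := hD2
  subst hδmin
  rcases F.eq_empty_or_nonempty with rfl | hFne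
  · refine ⟨0, le_rfl, by simp, fun w hw hwint => ?_⟩
    simpa using hmin w hw hwint (by simp [ipm])
  have hF2 : ∀ f ∈ F, MemLp f 2 P := fun f hf => (hF f hf).1
  set S := {w : X → ℝ | MemLp w 2 P ∧ ∫ x, w x ∂P = 1}
  have hSL2 : S ⊆ {w | MemLp w 2 P} := fun w hw => hw.1
  have hS : Convex ℝ S := convex_setOf_memLp_integral_eq one_le_two 1
  have hfin : ∀ w, MemLp w 2 P → ipm P Q F w = ((ipm P Q F w).toReal : EReal) := fun w hw =>
    (EReal.coe_toReal (ipm_lt_top hF2 hbdd hw2 hwipm hw).ne (bot_lt_ipm hFne).ne').symm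
  have hr : ConvexOn ℝ S fun w => (ipm P Q F w).toReal :=
    (convexOn_of_ipm_eq_coe hF2 hfin).subset hSL2 hS
  have hminS : ∀ w ∈ S, (ipm P Q F w).toReal ≤ δ → chiSqDiv P wstar ≤ chiSqDiv P w :=
    fun w hw h => hmin w hw.1 hw.2 (by rw [hfin w hw.1]; exact_mod_cast h)
  obtain ⟨w₀, hw₀, hw₀δ⟩ : ∃ w ∈ S, ipm P Q F w < δ := by simpa [iInf_lt_iff] using hδ
  obtain ⟨μ, hμ, hslack, hpen⟩ := (convexOn_chiSqDiv.subset hSL2 hS).exists_lagrange_multiplier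
    hr ⟨hw2, hw1⟩ (by rw [hfin wstar hw2] at hwipm; exact_mod_cast hwipm) hminS
    ⟨w₀, hw₀, by rw [hfin w₀ hw₀.1] at hw₀δ; exact_mod_cast hw₀δ⟩
  refine ⟨μ, hμ, ?_, fun w hw hwint => ?_⟩
  · rw [hfin wstar hw2]
    exact_mod_cast hslack
  · rw [hfin wstar hw2, hfin w hw]
    exact_mod_cast hpen w ⟨hw, hwint⟩

/-- existence of a Lagrange multiplier turning the IPM-constrained
balancing-weights problem into the penalized problem.  Finite signed measures `R ≪ P`
with `dR/dP ∈ L²(P)` and `R(X) = 1` are encoded by their densities `w`; `F` is convex,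
symmetric, contained in `L²(P) ∩ L¹(Q)`, and closed and bounded as a subset of `L²(P)`
(formalized via its image in the space `Lp ℝ 2 P` of a.e.-classes).  `IPM_F(Q,R)` is taken
in `EReal`, `δ_min` is its infimum over all feasible densities, and `δ > δ_min`.  If `R*`
minimizes `D₂(R‖P)` subject to `IPM_F(Q,R) ≤ δ`, then some `μ ≥ 0` satisfies complementary
slackness `μ·(IPM_F(Q,R*) − δ) = 0` and makes `R*` optimal for the penalized objective
`D₂(R‖P) + μ·IPM_F(Q,R)`. -/
theorem stmt_16 {X : Type*} [MeasurableSpace X] (P Q : Measure X)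
    [IsProbabilityMeasure P] [IsProbabilityMeasure Q]
    (F : Set (X → ℝ)) (hconv : Convex ℝ F)
    (hF : ∀ f ∈ F, MemLp f 2 P ∧ Integrable f Q)
    (hsymm : ∀ f ∈ F, -f ∈ F)
    (hclosed : IsClosed {g : Lp ℝ 2 P | ∃ f ∈ F, (g : X → ℝ) =ᵐ[P] f})
    (hbdd : Bornology.IsBounded {g : Lp ℝ 2 P | ∃ f ∈ F, (g : X → ℝ) =ᵐ[P] f})
    (IPM : (X → ℝ) → EReal)
    (hIPM : IPM = fun w => ⨆ f ∈ F, (((∫ x, f x ∂Q) - ∫ x, f x * w x ∂P : ℝ) : EReal))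
    (D2 : (X → ℝ) → ℝ) (hD2 : D2 = fun w => ∫ x, ((w x) ^ 2 - 1) ∂P)
    (δmin : EReal)
    (hδmin : δmin = ⨅ w ∈ {w : X → ℝ | MemLp w 2 P ∧ (∫ x, w x ∂P) = 1}, IPM w)
    (δ : ℝ) (hδ : δmin < (δ : EReal))
    (wstar : X → ℝ) (hw2 : MemLp wstar 2 P) (hw1 : (∫ x, wstar x ∂P) = 1)
    (hwipm : IPM wstar ≤ (δ : EReal))
    (hmin : ∀ w : X → ℝ, MemLp w 2 P → (∫ x, w x ∂P) = 1 → IPM w ≤ (δ : EReal) →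
      D2 wstar ≤ D2 w) :
    ∃ μ : ℝ, 0 ≤ μ ∧
      -- complementary slackness
      (μ : EReal) * (IPM wstar - (δ : EReal)) = 0 ∧
      -- optimality for the penalized problem over all feasible densities
      (∀ w : X → ℝ, MemLp w 2 P → (∫ x, w x ∂P) = 1 →
        ((D2 wstar : ℝ) : EReal) + (μ : EReal) * IPM wstar ≤
          ((D2 w : ℝ) : EReal) + (μ : EReal) * IPM w) :=
  stmt_16_general P Q F hF hbdd IPM hIPM D2 hD2 δmin hδmin δ hδ wstar hw2 hw1 hwipm hmin
end
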